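/- arXiv:1910.00154 — 6 statements merged into one kernel-verified Lean document; each statement's English description precedes it below -/
import Mathlib

section
/- For every real number a ≥ 0, the set E_{>a} = {f ∈ C(𝕀) : h_top(f) > a} is not convex as a subset of the Banach space C(𝕀,ℝ): there exist f, g ∈ E_{>a} such that (1/2)f + (1/2)g ∉ E_{>a}. In fact, there exists f ∈ C(𝕀) with f(1/2 − x) = f(1/2 + x) for all x ∈ [0,1/2] and h_top(f) > a, and for such f the map g = 1 − f satisfies h_top(g) = h_top(f) > a while (1/2)f + (1/2)g is the constant map 1/2, which has entropy 0. -/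
open unitInterval

/-- The topological entropy of a continuous self-map of the unit interval. -/
noncomputable def htop (f : C(I, I)) : EReal :=
  Dynamics.coverEntropy ⇑f Set.univ

/-- The convex combination `(1/2) f + (1/2) g` of two interval maps. -/
noncomputable def midMap (f g : C(I, I)) : C(I, I) :=
  ⟨fun x => ⟨((f x : ℝ) + (g x : ℝ)) / 2, by
      have hf := (f x).2
      have hg := (g x).2
      rw [Set.mem_Icc] at hf hg ⊢
      constructor <;> [linarith [hf.1, hg.1]; linarith [hf.2, hg.2]]⟩,
    by
      apply Continuous.subtype_mk
      fun_prop⟩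

/-!
Take `f x = |cos (π N x)|` with `N > exp a`. It is symmetric about `1/2`, and its `N` laps
`[j/N, (j + 1/2)/N]` are pairwise `1/(2N)`-separated and each mapped onto `I`; this horseshoe
gives `h_top f ≥ log N > a`. The reflection `σ` conjugates `f` to `1 - f`, so both have the same
entropy, while their average is the constant `1/2`, whose entropy is `0`.
-/

open Set Function Dynamics Real

section Horseshoe

variable {X : Type*} {T : X → X} {N : ℕ} {J : Fin N → Set X}

theorem exists_itinerary [Nonempty X] (hJ : ∀ j, SurjOn T (J j) univ) (n : ℕ) :
    ∃ p : (Fin n → Fin N) → X, ∀ w (k : Fin n), T^[k] (p w) ∈ J (w k) := by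
  choose pre hpre_mem hpre_eq using fun j (y : X) => hJ j (mem_univ y)
  induction n with
  | zero => exact ⟨fun _ => Classical.arbitrary X, fun _ k => k.elim0⟩
  | succ n ih =>
    obtain ⟨p, hp⟩ := ih
    refine ⟨fun w => pre (w 0) (p (Fin.tail w)), fun w k => ?_⟩
    induction k using Fin.cases with
    | zero => exact hpre_mem _ _
    | succ k =>
      rw [Fin.val_succ, iterate_succ_apply, hpre_eq]
      exact hp (Fin.tail w) k

theorem isDynNetIn_of_pairwise_le_dist [PseudoMetricSpace X] {n : ℕ} {δ : ℝ} {s : Set X}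
    (hs : s.Pairwise fun x y => ∃ k < n, δ ≤ dist (T^[k] x) (T^[k] y)) :
    IsDynNetIn T univ {q | dist q.1 q.2 < δ / 2} n s := by
  refine ⟨subset_univ s, fun x hx y hy hxy => disjoint_left.2 fun z hzx hzy => ?_⟩
  obtain ⟨k, hk, hδ⟩ := hs hx hy hxy
  have hxz : dist (T^[k] x) (T^[k] z) < δ / 2 := mem_ball_dynEntourage.1 hzx k hk
  have hyz : dist (T^[k] y) (T^[k] z) < δ / 2 := mem_ball_dynEntourage.1 hzy k hk
  linarith [dist_triangle_right (T^[k] x) (T^[k] y) (T^[k] z)]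

/-- The points with prescribed itineraries `Fin n → Fin N` form dynamical nets of size `N ^ n`. -/
theorem log_le_coverEntropy_of_horseshoe [PseudoMetricSpace X] [Nonempty X] {δ : ℝ}
    (hδ : 0 < δ) (hJ : ∀ j, SurjOn T (J j) univ)
    (hsep : Pairwise fun i j => ∀ x ∈ J i, ∀ y ∈ J j, δ ≤ dist x y) :
    ENNReal.log N ≤ coverEntropy T univ := by
  refine le_trans ?_ (netEntropyEntourage_le_coverEntropy T univ
    (Metric.dist_mem_uniformity (half_pos hδ)))
  rw [← ExpGrowth.expGrowthSup_pow]
  refine ExpGrowth.expGrowthSup_monotone fun n => ?_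
  obtain ⟨p, hp⟩ := exists_itinerary hJ n
  have hsep_iter : ∀ w w', w ≠ w' → ∃ k < n, δ ≤ dist (T^[k] (p w)) (T^[k] (p w')) := by
    intro w w' hww'
    obtain ⟨k, hk⟩ := Function.ne_iff.1 hww'
    exact ⟨k, k.isLt, hsep hk _ (hp w k) _ (hp w' k)⟩
  have hinj : Injective p := by
    intro w w' h
    by_contra hww'
    obtain ⟨k, -, hk⟩ := hsep_iter w w' hww'
    rw [h, dist_self] at hk
    exact hk.not_gt hδ
  have hnet : IsDynNetIn T univ {q | dist q.1 q.2 < δ / 2} n ↑(Finset.univ.map ⟨p, hinj⟩) := by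
    refine isDynNetIn_of_pairwise_le_dist ?_
    rintro _ hx _ hy hne
    obtain ⟨w, -, rfl⟩ := Finset.mem_map.1 hx
    obtain ⟨w', -, rfl⟩ := Finset.mem_map.1 hy
    exact hsep_iter w w' (fun h => hne (h ▸ rfl))
  calc (N : ENNReal) ^ n = ((Finset.univ.map ⟨p, hinj⟩).card : ℕ∞) := by simp
    _ ≤ _ := ENat.toENNReal_le.2 hnet.card_le_netMaxcard

end Horseshoe

section UniformSpace

variable {X Y : Type*} [UniformSpace X] [UniformSpace Y]

theorem coverEntropy_univ_le_of_semiconj {φ : X → Y} {S : X → X} {T : Y → Y}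
    (h : Semiconj φ S T) (hφ : UniformContinuous φ) (hφ_surj : Surjective φ) :
    coverEntropy T univ ≤ coverEntropy S univ := by
  simpa [hφ_surj.range_eq] using coverEntropy_image_le_of_uniformContinuous h hφ univ

theorem coverEntropy_univ_eq_of_semiconj [CompactSpace X] [CompactSpace Y] (φ : X ≃ₜ Y)
    {S : X → X} {T : Y → Y} (h : Semiconj φ S T) :
    coverEntropy T univ = coverEntropy S univ :=
  le_antisymm
    (coverEntropy_univ_le_of_semiconj h
      (CompactSpace.uniformContinuous_of_continuous φ.continuous) φ.surjective)
    (coverEntropy_univ_le_of_semiconj (h.inverse_left φ.left_inv φ.right_inv)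
      (CompactSpace.uniformContinuous_of_continuous φ.symm.continuous) φ.symm.surjective)

theorem coverEntropy_const [CompactSpace X] (c : X) : coverEntropy (fun _ : X => c) univ = 0 := by
  refine le_antisymm (iSup₂_le fun U hU => ?_) (coverEntropy_nonneg _ ⟨c, mem_univ c⟩)
  obtain ⟨s, hs⟩ := exists_isDynCoverOf_of_isCompact_invariant isCompact_univ
    (mapsTo_univ (fun _ : X => c) univ) hU 1
  -- after one step every orbit sits at `c`, so a cover at time `1` serves at every time
  have hcover : ∀ n, IsDynCoverOf (fun _ : X => c) univ U n s := by
    intro n x hx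
    obtain ⟨y, hy, hxy⟩ := hs hx
    refine ⟨y, hy, mem_dynEntourage.2 fun k _ => ?_⟩
    rcases k with _ | k
    · simpa using mem_dynEntourage.1 hxy 0 one_pos
    · simpa only [iterate_succ_apply'] using refl_mem_uniformity hU
  calc coverEntropyEntourage (fun _ : X => c) univ U
      ≤ ExpGrowth.expGrowthSup fun _ => 1 := by
        refine ExpGrowth.expGrowthSup_le_of_eventually_le (b := s.card) (by simp)
          (Filter.Eventually.of_forall fun n => ?_)
        simpa using ENat.toENNReal_le.2 (hcover n).coverMincard_le_card
    _ = 0 := ExpGrowth.expGrowthSup_const one_ne_zero ENNReal.one_ne_top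

end UniformSpace

section AbsCos

theorem abs_cos_nat_mul_pi_add (j : ℕ) (t : ℝ) : |cos (j * π + t)| = |cos t| := by
  rw [add_comm, cos_add_nat_mul_pi]
  simp

noncomputable def absCosMap (N : ℕ) : C(I, I) :=
  ⟨fun x => ⟨|cos (π * N * x)|, abs_nonneg _, abs_cos_le_one _⟩,
    Continuous.subtype_mk (by fun_prop) _⟩

theorem coe_absCosMap (N : ℕ) (x : I) : (absCosMap N x : ℝ) = |cos (π * N * x)| := rfl

theorem absCosMap_symm (N : ℕ) (x : I) : absCosMap N (σ x) = absCosMap N x := by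
  ext
  rw [coe_absCosMap, coe_absCosMap, coe_symm_eq, mul_one_sub, mul_comm π (N : ℝ),
    cos_nat_mul_pi_sub]
  simp

/-- The `j`-th lap of `absCosMap N`, on which `π N x` runs through `[j π, j π + π / 2]`. -/
def absCosLap (N : ℕ) (j : Fin N) : Set I := {x | (j : ℝ) ≤ N * x ∧ N * (x : ℝ) ≤ j + 1 / 2}

theorem surjOn_absCosMap_absCosLap (N : ℕ) (j : Fin N) :
    SurjOn (absCosMap N) (absCosLap N j) univ := by
  intro y _
  have hN : (0 : ℝ) < N := by exact_mod_cast j.pos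
  have hj : (j : ℝ) + 1 ≤ N := by exact_mod_cast j.isLt
  have harccos_nonneg : 0 ≤ arccos y / π := div_nonneg (arccos_nonneg y) pi_pos.le
  have harccos_le : arccos y / π ≤ 1 / 2 := by
    rw [div_le_iff₀ pi_pos]
    linarith [arccos_le_pi_div_two.2 y.2.1]
  set t := (j + arccos y / π) / N with ht_def
  have hNt : N * t = j + arccos y / π := by rw [ht_def]; field_simp
  have ht : t ∈ I := ⟨by positivity, by rw [div_le_one hN]; linarith⟩
  refine ⟨⟨t, ht⟩, ⟨by simp only [hNt]; linarith, by simp only [hNt]; linarith⟩, ?_⟩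
  have hπNt : π * N * t = j * π + arccos y := by
    rw [mul_assoc, hNt]
    field_simp
  ext
  rw [coe_absCosMap, hπNt, abs_cos_nat_mul_pi_add, cos_arccos (by linarith [y.2.1]) y.2.2,
    abs_of_nonneg y.2.1]

theorem absCosLap_separated (N : ℕ) :
    Pairwise fun i j => ∀ x ∈ absCosLap N i, ∀ y ∈ absCosLap N j, 1 / (2 * N) ≤ dist x y := by
  have lt_sep : ∀ i j : Fin N, i < j →
      ∀ x ∈ absCosLap N i, ∀ y ∈ absCosLap N j, 1 / (2 * N) ≤ dist x y := by
    intro i j hij x hx y hy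
    have hN : (0 : ℝ) < N := by exact_mod_cast j.pos
    have hij' : (i : ℝ) + 1 ≤ j := by exact_mod_cast hij
    rw [Subtype.dist_eq, dist_comm, Real.dist_eq, div_le_iff₀ (by positivity)]
    nlinarith [le_abs_self ((y : ℝ) - x), hx.2, hy.1]
  intro i j hij x hx y hy
  rcases lt_or_gt_of_ne hij with h | h
  · exact lt_sep i j h x hx y hy
  · rw [dist_comm]
    exact lt_sep j i h y hy x hx

theorem log_le_htop_absCosMap (N : ℕ) : ENNReal.log N ≤ htop (absCosMap N) := by
  rcases N.eq_zero_or_pos with rfl | hN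
  · simp
  exact log_le_coverEntropy_of_horseshoe (by positivity) (surjOn_absCosMap_absCosLap N)
    (absCosLap_separated N)

end AbsCos

theorem exists_symm_lt_htop (a : ℝ) :
    ∃ f : C(I, I), (∀ x, f (σ x) = f x) ∧ (a : EReal) < htop f := by
  obtain ⟨N, hN⟩ := exists_nat_gt (exp a)
  have hN_pos : (0 : ℝ) < N := (exp_pos a).trans hN
  refine ⟨absCosMap N, absCosMap_symm N, lt_of_lt_of_le ?_ (log_le_htop_absCosMap N)⟩
  rw [← ENNReal.ofReal_natCast, ENNReal.log_ofReal_of_pos hN_pos, EReal.coe_lt_coe_iff]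
  exact (lt_log_iff_exp_lt hN_pos).2 hN

/-- `σ` conjugates a symmetric map `f` to `1 - f`. -/
theorem htop_eq_of_symm {f g : C(I, I)} (hf : ∀ x, f (σ x) = f x)
    (hg : ∀ x, (g x : ℝ) = 1 - f x) : htop g = htop f := by
  refine coverEntropy_univ_eq_of_semiconj symmHomeomorph fun x => ?_
  ext
  simp [hg, hf]

theorem htop_eq_zero_of_forall_eq {f : C(I, I)} {c : I} (h : ∀ x, f x = c) : htop f = 0 := by
  rw [htop, show ⇑f = fun _ => c from funext h]
  exact coverEntropy_const c

theorem coe_midMap_of_eq_one_sub {f g : C(I, I)} (hg : ∀ x, (g x : ℝ) = 1 - f x) (x : I) :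
    (midMap f g x : ℝ) = 1 / 2 := by
  change ((f x : ℝ) + g x) / 2 = 1 / 2
  rw [hg]
  ring

/-- For every real `a ≥ 0`, the set `E_{> a}` is not convex: there are `f, g` with entropy
`> a` whose midpoint `(1/2) f + (1/2) g` does not have entropy `> a`. In fact, there is an
`f` with `f(1 - x) = f(x)` and entropy `> a`; for such an `f`, the map `g = 1 - f` has the
same entropy as `f`, while `(1/2) f + (1/2) g` is the constant map `1/2`, whose entropy
is `0`. -/
theorem E_gt_not_convex (a : ℝ) (ha : 0 ≤ a) :
    (∃ f g : C(I, I), (a : EReal) < htop f ∧ (a : EReal) < htop g ∧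
      ¬ (a : EReal) < htop (midMap f g)) ∧
    ∃ f : C(I, I), (∀ x : I, f (σ x) = f x) ∧ (a : EReal) < htop f ∧
      ∀ g : C(I, I), (∀ x : I, (g x : ℝ) = 1 - (f x : ℝ)) →
        htop g = htop f ∧ (a : EReal) < htop g ∧
        (∀ x : I, (midMap f g x : ℝ) = 1 / 2) ∧ htop (midMap f g) = 0 := by
  obtain ⟨f, hf_symm, hf⟩ := exists_symm_lt_htop a
  have reflect : ∀ g : C(I, I), (∀ x : I, (g x : ℝ) = 1 - (f x : ℝ)) →
      htop g = htop f ∧ (a : EReal) < htop g ∧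
        (∀ x : I, (midMap f g x : ℝ) = 1 / 2) ∧ htop (midMap f g) = 0 := by
    intro g hg
    have hgf := htop_eq_of_symm hf_symm hg
    have hmid := coe_midMap_of_eq_one_sub hg
    exact ⟨hgf, hgf ▸ hf, hmid,
      htop_eq_zero_of_forall_eq (c := ⟨1 / 2, by norm_num, by norm_num⟩) (Subtype.ext <| hmid ·)⟩
  obtain ⟨-, hg, -, hmid⟩ := reflect (.comp ⟨σ, continuous_symm⟩ f) (coe_symm_eq <| f ·)
  refine ⟨⟨f, _, hf, hg, ?_⟩, f, hf_symm, hf, reflect⟩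
  rw [hmid]
  exact_mod_cast ha.not_gt
end

section
/- The set E_{≤0} = {f ∈ C(𝕀) : h_top(f) = 0} is not convex as a subset of the Banach space C(𝕀,ℝ): there exist f, g ∈ C(𝕀) with h_top(f) = h_top(g) = 0 such that h_top((1/2)f + (1/2)g) > 0. Specifically, one may take f to be the piecewise linear map through the points (0,1), (1/4,0), (1,0) and g the piecewise linear map through the points (0,1/2), (1/4,0), (1/2,0), (3/4,1/2), (1,1/2); then φ = (1/2)f + (1/2)g has 0 as a periodic point of period 3, so h_top(φ) > 0. -/
open unitInterval

namespace NotConvex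

open unitInterval Dynamics Set


/-- clamp into `[0, L]`. -/
noncomputable def cl (L z : ℝ) : ℝ := max 0 (min L z)

/-- iterated affine map `z ↦ L - lam * z`. -/
noncomputable def lm (L lam : ℝ) (k : ℕ) (z : ℝ) : ℝ :=
  (-lam)^k * (z - L/(lam+1)) + L/(lam+1)

variable {L lam : ℝ}

lemma lm_zero (L lam z : ℝ) : lm L lam 0 z = z := by simp [lm]

lemma lm_succ (hlam : 1 ≤ lam) (k : ℕ) (z : ℝ) :
    lm L lam (k+1) z = L - lam * lm L lam k z := by
  have h : lam + 1 ≠ 0 := by linarith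
  have key : L - lam * (L/(lam+1)) = L/(lam+1) := by field_simp; ring
  simp only [lm, pow_succ]
  nlinarith [key]

lemma cl_mem (hL : 0 ≤ L) (z : ℝ) : cl L z ∈ Icc 0 L := by
  constructor
  · exact le_max_left _ _
  · exact max_le hL (min_le_left _ _)

lemma cl_of_mem {z : ℝ} (h : z ∈ Icc 0 L) : cl L z = z := by
  rw [cl, min_eq_right h.2, max_eq_right h.1]

lemma cl_lip (a b : ℝ) : |cl L a - cl L b| ≤ |a - b| := by
  unfold cl
  rw [max_comm 0 (min L a), max_comm 0 (min L b)]
  refine (abs_max_sub_max_le_abs _ _ _).trans ?_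
  refine (abs_min_sub_min_le_max L a L b).trans ?_
  simp

/-- key semiconjugacy identity: clamping commutes with the affine step. -/
lemma cl_step (hL : 0 ≤ L) (hlam : 1 ≤ lam) (z : ℝ) :
    cl L (L - lam * cl L z) = cl L (L - lam * z) := by
  rcases le_total z 0 with h | h
  · have h1 : cl L z = 0 := by
      rw [cl, max_eq_left]; exact min_le_of_right_le h
    have h2 : L ≤ L - lam * z := by nlinarith
    rw [h1, mul_zero, sub_zero, cl_of_mem ⟨hL, le_refl L⟩, cl, min_eq_left h2,
      max_eq_right hL]
  · rcases le_total L z with h' | h'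
    · have h1 : cl L z = L := by
        rw [cl, min_eq_left h', max_eq_right hL]
      have h2 : L - lam * z ≤ L - lam * L := by nlinarith
      have h3 : L - lam * L ≤ 0 := by nlinarith
      rw [h1, cl, cl, max_eq_left, max_eq_left]
      · exact min_le_of_right_le (by linarith)
      · exact min_le_of_right_le (by linarith)
    · rw [cl_of_mem ⟨h, h'⟩]

lemma cl_of_nonpos {z : ℝ} (h : z ≤ 0) : cl L z = 0 :=
  max_eq_left (min_le_of_right_le h)

lemma cl_of_ge (hL : 0 ≤ L) {z : ℝ} (h : L ≤ z) : cl L z = L := by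
  rw [cl, min_eq_left h, max_eq_right hL]

lemma lm_sub (L lam : ℝ) (K : ℕ) (a b : ℝ) :
    lm L lam K a - lm L lam K b = (-lam)^K * (a - b) := by
  unfold lm; ring

lemma abs_lm_sub (hlam : 1 ≤ lam) (K : ℕ) (a b : ℝ) :
    |lm L lam K a - lm L lam K b| = lam^K * |a - b| := by
  rw [lm_sub, abs_mul, abs_pow, abs_neg, abs_of_nonneg (by linarith : (0:ℝ) ≤ lam)]

lemma lm_step_mem (hL : 0 < L) (hlam : 1 ≤ lam) {w : ℝ}
    (h : L - lam * w ∈ Icc 0 L) : w ∈ Icc 0 L := by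
  rcases h with ⟨h1, h2⟩
  constructor
  · nlinarith
  · nlinarith

lemma lm_band_mem (hL : 0 < L) (hlam : 1 ≤ lam) {K : ℕ} {z : ℝ}
    (h : lm L lam K z ∈ Icc 0 L) : z ∈ Icc 0 L := by
  induction K with
  | zero => rwa [lm_zero] at h
  | succ k ih =>
    rw [lm_succ hlam] at h
    exact ih (lm_step_mem hL hlam h)

/-- inverse of `lm K`. -/
noncomputable def pb (L lam : ℝ) (K : ℕ) (t : ℝ) : ℝ :=
  (t - L/(lam+1)) / (-lam)^K + L/(lam+1)

lemma lm_pb (hlam : 1 ≤ lam) (K : ℕ) (t : ℝ) : lm L lam K (pb L lam K t) = t := by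
  have h : ((-lam)^K : ℝ) ≠ 0 := pow_ne_zero _ (by intro h; rw [neg_eq_zero] at h; linarith)
  have h2 : lam + 1 ≠ 0 := by linarith
  unfold lm pb
  field_simp
  ring

lemma lm_side (hL : 0 < L) (hlam : 1 ≤ lam) {u v : ℝ} {K : ℕ}
    (h1 : lm L lam (K+1) u ≤ 0) (h2 : lm L lam (K+1) v ≤ 0) :
    ∀ m, K+1 ≤ m → cl L (lm L lam m u) = cl L (lm L lam m v) := by
  have hlam0 : (0:ℝ) < lam := by linarith
  have hQ : ∀ m, K+1 ≤ m →
      (lm L lam m u ≤ 0 ∧ lm L lam m v ≤ 0) ∨ (L ≤ lm L lam m u ∧ L ≤ lm L lam m v) := by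
    intro m hm
    induction m, hm using Nat.le_induction with
    | base => exact Or.inl ⟨h1, h2⟩
    | succ m hm ih =>
      rw [lm_succ hlam, lm_succ hlam]
      rcases ih with ⟨ha, hb⟩ | ⟨ha, hb⟩
      · right
        constructor <;> nlinarith
      · left
        constructor <;> nlinarith
  intro m hm
  rcases hQ m hm with ⟨ha, hb⟩ | ⟨ha, hb⟩
  · rw [cl_of_nonpos ha, cl_of_nonpos hb]
  · rw [cl_of_ge hL.le ha, cl_of_ge hL.le hb]

/-- The main shared spanning lemma in value space. -/
lemma shared_span (hL : 0 < L) (hlam : 1 ≤ lam) {ε : ℝ} (hε : 0 < ε) :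
    ∃ C : ℕ, 0 < C ∧ ∀ n : ℕ, ∃ ts : Finset ℝ,
      (↑ts ⊆ Icc (0:ℝ) L) ∧ ts.card ≤ C * (n+1) ∧
      ∀ u ∈ Icc (0:ℝ) L, ∃ t ∈ ts,
        |u - t| ≤ ε ∧ ∀ k < n, |cl L (lm L lam k u) - cl L (lm L lam k t)| ≤ ε := by
  classical
  have hlam0 : (0:ℝ) < lam := by linarith
  obtain ⟨N, hNge⟩ : ∃ N : ℕ, L/ε ≤ N := ⟨⌈L/ε⌉₊, Nat.le_ceil _⟩
  refine ⟨2*(N+1), by positivity, fun n => ?_⟩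
  set g1 : ℕ × ℕ → ℝ := fun p => pb L lam p.1 (min L ((p.2 : ℝ)*ε)) with hg1
  set g2 : ℕ × ℕ → ℝ := fun p => pb L lam p.1 (min L (max (L/lam) ((p.2 : ℝ)*ε))) with hg2
  refine ⟨((Finset.range (n+1)) ×ˢ (Finset.range (N+1))).image g1 ∪
    ((Finset.range (n+1)) ×ˢ (Finset.range (N+1))).image g2, ?_, ?_, ?_⟩
  · intro x hx
    simp only [Finset.coe_union, Finset.coe_image, mem_union, mem_image] at hx
    have pbmem : ∀ (K : ℕ) (t : ℝ), t ∈ Icc (0:ℝ) L → pb L lam K t ∈ Icc (0:ℝ) L :=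
      fun K t ht => lm_band_mem hL hlam (by rwa [lm_pb hlam])
    rcases hx with ⟨p, _, rfl⟩ | ⟨p, _, rfl⟩
    · exact pbmem _ _ ⟨le_min hL.le (by positivity), min_le_left _ _⟩
    · exact pbmem _ _ ⟨le_min hL.le (le_max_of_le_left (by positivity)), min_le_left _ _⟩
  · calc _ ≤ _ + _ := Finset.card_union_le _ _
      _ ≤ 2*(N+1)*(n+1) := by
          have h1 := Finset.card_image_le
            (s := (Finset.range (n+1)) ×ˢ (Finset.range (N+1))) (f := g1)
          have h2 := Finset.card_image_le
            (s := (Finset.range (n+1)) ×ˢ (Finset.range (N+1))) (f := g2)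
          rw [Finset.card_product, Finset.card_range, Finset.card_range] at h1 h2
          nlinarith
  · intro u hu
    obtain ⟨K, hKn, hK, hKmax⟩ :
        ∃ K, K ≤ n ∧ (lm L lam K u ∈ Icc (0:ℝ) L) ∧
          (K < n → ¬ (lm L lam (K+1) u ∈ Icc (0:ℝ) L)) := by
      refine ⟨Nat.findGreatest (fun k => lm L lam k u ∈ Icc (0:ℝ) L) n,
        Nat.findGreatest_le n,
        Nat.findGreatest_spec (P := fun k => lm L lam k u ∈ Icc (0:ℝ) L) (Nat.zero_le n) ?_,
        fun h => Nat.findGreatest_is_greatest (P := fun k => lm L lam k u ∈ Icc (0:ℝ) L) (Nat.lt_succ_self _) (Nat.succ_le_of_lt h)⟩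
      show lm L lam 0 u ∈ Icc (0:ℝ) L
      rw [lm_zero]
      exact hu
    obtain ⟨w, hw⟩ : ∃ w, w = lm L lam K u := ⟨_, rfl⟩
    rw [← hw] at hK
    have hw0 : 0 ≤ w := hK.1
    have hwL : w ≤ L := hK.2
    obtain ⟨j, hjle, hjge, hjN⟩ :
        ∃ j : ℕ, (j:ℝ)*ε ≤ w ∧ w - ε ≤ (j:ℝ)*ε ∧ j ∈ Finset.range (N+1) := by
      refine ⟨⌊w/ε⌋₊, ?_, ?_, ?_⟩
      · calc (⌊w/ε⌋₊ : ℝ) * ε ≤ (w/ε) * ε :=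
            mul_le_mul_of_nonneg_right (Nat.floor_le (by positivity)) hε.le
          _ = w := by field_simp
      · have h2 : w/ε < (⌊w/ε⌋₊:ℝ) + 1 := Nat.lt_floor_add_one (w/ε)
        have := (div_lt_iff₀ hε).1 h2
        nlinarith
      · rw [Finset.mem_range, Nat.lt_succ_iff]
        have : w/ε ≤ (N:ℝ) := le_trans (by gcongr) hNge
        calc ⌊w/ε⌋₊ ≤ ⌊(N:ℝ)⌋₊ := Nat.floor_mono this
          _ = N := Nat.floor_natCast N
    -- select the target value `t'` at level `K`
    obtain ⟨t', htmem, ht'mem, ht'close, hside⟩ :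
        ∃ t', (pb L lam K t' ∈ ((Finset.range (n+1)) ×ˢ (Finset.range (N+1))).image g1 ∪
            ((Finset.range (n+1)) ×ˢ (Finset.range (N+1))).image g2) ∧
          t' ∈ Icc (0:ℝ) L ∧ |w - t'| ≤ ε ∧
          (K < n → (L - lam * w ≤ 0 ∧ L - lam * t' ≤ 0)) := by
      by_cases hcase : K < n
      · have hnP := hKmax hcase
        rw [mem_Icc] at hnP
        push_neg at hnP
        have hc : L - lam * w < 0 := by
          rcases lt_or_ge (L - lam * w) 0 with h | h
          · exact h
          · exfalso
            rw [lm_succ hlam, ← hw] at hnP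
            have := hnP h
            nlinarith
        refine ⟨min L (max (L/lam) ((j:ℝ)*ε)), ?_, ?_, ?_, ?_⟩
        · apply Finset.mem_union_right
          exact Finset.mem_image.2 ⟨(K, j),
            Finset.mem_product.2 ⟨Finset.mem_range.2 (by omega), hjN⟩, rfl⟩
        · exact ⟨le_min hL.le (le_max_of_le_left (by positivity)), min_le_left _ _⟩
        · have heq : min L (max (L/lam) ((j:ℝ)*ε)) = max (L/lam) ((j:ℝ)*ε) :=
            min_eq_right (max_le ((div_le_iff₀ hlam0).2 (by nlinarith)) (hjle.trans hwL))
          rw [heq]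
          have h1 : L/lam ≤ w := (div_le_iff₀ hlam0).2 (by nlinarith)
          rcases max_cases (L/lam) ((j:ℝ)*ε) with ⟨h2, h3⟩ | ⟨h2, h3⟩ <;> rw [h2, abs_of_nonneg] <;>
            linarith
        · intro _
          refine ⟨hc.le, ?_⟩
          have heq : min L (max (L/lam) ((j:ℝ)*ε)) = max (L/lam) ((j:ℝ)*ε) :=
            min_eq_right (max_le ((div_le_iff₀ hlam0).2 (by nlinarith)) (hjle.trans hwL))
          rw [heq]
          have h1 : L/lam ≤ max (L/lam) ((j:ℝ)*ε) := le_max_left _ _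
          rw [div_le_iff₀ hlam0] at h1
          nlinarith
      · refine ⟨min L ((j:ℝ)*ε), ?_, ?_, ?_, fun h => absurd h hcase⟩
        · apply Finset.mem_union_left
          exact Finset.mem_image.2 ⟨(K, j),
            Finset.mem_product.2 ⟨Finset.mem_range.2 (by omega), hjN⟩, rfl⟩
        · exact ⟨le_min hL.le (by positivity), min_le_left _ _⟩
        · rw [min_eq_right (hjle.trans hwL), abs_of_nonneg (by linarith)]
          linarith
    -- now the chosen point
    obtain ⟨v, hlmv, hveq⟩ : ∃ v, lm L lam K v = t' ∧ v = pb L lam K t' :=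
      ⟨pb L lam K t', lm_pb hlam K t', rfl⟩
    rw [← hveq] at htmem
    have huv : lam^K * |u - v| = |w - t'| := by
      rw [← hlmv, hw, ← abs_lm_sub hlam]
    have hpow1 : (1:ℝ) ≤ lam^K := one_le_pow₀ hlam
    have huvε : |u - v| ≤ ε := by
      nlinarith [abs_nonneg (u-v), abs_nonneg (w-t')]
    refine ⟨v, htmem, huvε, fun k hk => ?_⟩
    rcases le_or_gt k K with hkK | hkK
    · refine (cl_lip _ _).trans ?_
      rw [abs_lm_sub hlam]
      have h1 : lam^k ≤ lam^K := pow_le_pow_right₀ (by linarith) hkK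
      calc lam^k * |u-v| ≤ lam^K * |u-v| :=
            mul_le_mul_of_nonneg_right h1 (abs_nonneg _)
        _ = |w - t'| := huv
        _ ≤ ε := ht'close
    · obtain ⟨hside1, hside2⟩ := hside (by omega)
      have h1 : lm L lam (K+1) u ≤ 0 := by rw [lm_succ hlam, ← hw]; exact hside1
      have h2 : lm L lam (K+1) v ≤ 0 := by rw [lm_succ hlam, hlmv]; exact hside2
      rw [lm_side hL hlam h1 h2 k hkK, sub_self, abs_zero]
      exact hε.le

open Filter in
lemma real_log_lin_tendsto (C : ℕ) (hC : 0 < C) :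
    Tendsto (fun n : ℕ => Real.log (C*(n+1)) / n) atTop (nhds 0) := by
  have h1 : Tendsto (fun x : ℝ => Real.log x / x) atTop (nhds 0) :=
    Real.isLittleO_log_id_atTop.tendsto_div_nhds_zero
  have h2 : Tendsto (fun n : ℕ => (C:ℝ)*(n+1)) atTop atTop := by
    refine tendsto_atTop_mono (fun n => ?_) tendsto_natCast_atTop_atTop
    have h1C : (1:ℝ) ≤ C := by exact_mod_cast hC
    have h0n : (0:ℝ) ≤ n := Nat.cast_nonneg n
    nlinarith
  have h3 : Tendsto (fun n : ℕ => Real.log ((C:ℝ)*(n+1)) / ((C:ℝ)*(n+1))) atTop (nhds 0) :=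
    h1.comp h2
  have h4 : Tendsto (fun n : ℕ => ((C:ℝ)*(n+1)) / n) atTop (nhds (C:ℝ)) := by
    have : Tendsto (fun n : ℕ => (C:ℝ)*(1 + 1/n)) atTop (nhds ((C:ℝ)*(1+0))) := by
      exact tendsto_const_nhds.mul (tendsto_const_nhds.add tendsto_one_div_atTop_nhds_zero_nat)
    rw [add_zero, mul_one] at this
    refine this.congr' ?_
    filter_upwards [eventually_gt_atTop 0] with n hn
    have hn' : (n:ℝ) ≠ 0 := Nat.cast_ne_zero.2 hn.ne'
    field_simp
  have h5 := h3.mul h4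
  rw [zero_mul] at h5
  refine h5.congr' ?_
  filter_upwards [eventually_gt_atTop 0] with n hn
  have hb : (C:ℝ)*(n+1) ≠ 0 := by positivity
  field_simp

open Filter Uniformity SetRel in
/-- If a continuous self-map of `I` admits `(n, ε)`-spanning sets of cardinality linear
in `n` for every `ε > 0`, then its topological entropy is `0`. -/
lemma coverEntropy_eq_zero_of_linear_cover (T : C(I, I))
    (h : ∀ ε : ℝ, 0 < ε → ∃ C : ℕ, 0 < C ∧ ∀ n : ℕ, ∃ s : Finset I,
      s.card ≤ C * (n+1) ∧
      IsDynCoverOf (⇑T) Set.univ {p : I × I | dist p.1 p.2 < ε} n s) :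
    coverEntropy (⇑T) Set.univ = 0 := by
  refine le_antisymm ?_ (coverEntropy_nonneg ⇑T (by simp [univ_nonempty]))
  rw [coverEntropy_eq_iSup_basis Metric.uniformity_basis_dist]
  refine iSup₂_le fun ε hε => ?_
  obtain ⟨C, hC, hs⟩ := h (ε/3) (by positivity)
  set V : Set (I × I) := {p : I × I | dist p.1 p.2 < ε/3} with hV
  have hVsymm : SetRel.IsSymm V := by
    constructor; intro a b hab
    simp only [hV, mem_setOf_eq] at hab ⊢; rwa [dist_comm]
  have hVV : V ○ V ⊆ {p : I × I | dist p.1 p.2 < ε} := by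
    rintro ⟨x, y⟩ ⟨z, h1, h2⟩
    simp only [hV, mem_setOf_eq] at h1 h2 ⊢
    calc dist x y ≤ dist x z + dist z y := dist_triangle _ _ _
      _ < ε := by linarith
  refine le_trans (coverEntropyEntourage_antitone ⇑T Set.univ hVV) ?_
  set a := coverEntropyEntourage ⇑T Set.univ (V ○ V) with ha
  have key : ∀ n : ℕ, 0 < n → a ≤ ((Real.log (C*(n+1)) / n : ℝ) : EReal) := by
    intro n hn
    obtain ⟨s, hcard, hcover⟩ := hs n
    refine le_trans
      (coverEntropyEntourage_le_log_coverMincard_div (mapsTo_univ ⇑T Set.univ) hn.ne') ?_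
    have h1 : coverMincard ⇑T Set.univ V n ≤ (C*(n+1) : ℕ) :=
      le_trans (hcover.coverMincard_le_card) (by exact_mod_cast hcard)
    have h2 : ENNReal.log (coverMincard ⇑T Set.univ V n) ≤ ((Real.log (C*(n+1)) : ℝ) : EReal) := by
      refine le_trans (ENNReal.log_monotone (ENat.toENNReal_mono h1)) ?_
      rw [ENat.toENNReal_coe, ← ENNReal.ofReal_natCast,
        ENNReal.log_ofReal_of_pos (by positivity)]
      norm_num
    calc ENNReal.log (coverMincard ⇑T Set.univ V n) / (n : EReal)
        ≤ ((Real.log (C*(n+1)) : ℝ) : EReal) / (n : EReal) :=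
          EReal.monotone_div_right_of_nonneg (by exact_mod_cast Nat.cast_nonneg' n) h2
      _ = ((Real.log (C*(n+1)) / n : ℝ) : EReal) := by
          rw [EReal.coe_div, EReal.coe_coe_eq_natCast]
  have hle : a ≤ atTop.liminf (fun n : ℕ => ((Real.log (C*(n+1)) / n : ℝ) : EReal)) := by
    refine le_liminf_of_le (by isBoundedDefault) ?_
    filter_upwards [eventually_gt_atTop 0] with n hn
    exact key n hn
  refine hle.trans_eq ?_
  have := (real_log_lin_tendsto C hC)
  have hE : Tendsto (fun n : ℕ => ((Real.log (C*(n+1)) / n : ℝ) : EReal)) atTop (nhds ((0:ℝ) : EReal)) :=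
    (EReal.tendsto_coe).2 this
  rw [EReal.coe_zero] at hE
  exact hE.liminf_eq

/-- embed a real into `I` by clamping. -/
noncomputable def emb (r : ℝ) : I := ⟨cl 1 r, cl_mem zero_le_one r⟩

lemma emb_coe {r : ℝ} (h : r ∈ Icc (0:ℝ) 1) : (emb r : ℝ) = r := cl_of_mem h

/-- the tent-like map `f` through `(0,1), (1/4,0), (1,0)`. -/
noncomputable def fmap : C(I, I) :=
  ⟨fun x => emb (1 - 4*(x:ℝ)), by
    apply Continuous.subtype_mk
    exact continuous_const.max (continuous_const.min
      (continuous_const.sub (continuous_const.mul continuous_subtype_val)))⟩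

lemma fmap_coe (x : I) : (fmap x : ℝ) = cl 1 (1 - 4*(x:ℝ)) := rfl

lemma fmap_iter (x : I) (k : ℕ) : (((⇑fmap)^[k] x : I) : ℝ) = cl 1 (lm 1 4 k (x:ℝ)) := by
  induction k with
  | zero => rw [Function.iterate_zero_apply, lm_zero, cl_of_mem x.2]
  | succ k ih =>
    rw [Function.iterate_succ_apply', fmap_coe, ih,
      show (1 : ℝ) - 4 * cl 1 (lm 1 4 k (x:ℝ)) = 1 - 4 * cl 1 (lm 1 4 k (x:ℝ)) from rfl,
      cl_step zero_le_one (by norm_num : (1:ℝ) ≤ 4), ← lm_succ (by norm_num : (1:ℝ) ≤ 4)]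

lemma fmap_cover : ∀ ε : ℝ, 0 < ε → ∃ C : ℕ, 0 < C ∧ ∀ n : ℕ, ∃ s : Finset I,
    s.card ≤ C * (n+1) ∧
    IsDynCoverOf (⇑fmap) Set.univ {p : I × I | dist p.1 p.2 < ε} n s := by
  intro ε hε
  obtain ⟨C, hC, hspan⟩ := shared_span (one_pos) (by norm_num : (1:ℝ) ≤ 4)
    (half_pos hε)
  refine ⟨C, hC, fun n => ?_⟩
  obtain ⟨ts, hsub, hcard, hts⟩ := hspan n
  refine ⟨ts.image emb, le_trans (Finset.card_image_le) hcard, ?_⟩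
  intro x _
  obtain ⟨t, htts, _, hk⟩ := hts (x:ℝ) x.2
  have htI : t ∈ Icc (0:ℝ) 1 := by
    have := hsub htts
    exact ⟨this.1, this.2.trans (le_refl 1)⟩
  refine ⟨emb t, Finset.mem_image_of_mem emb htts, ?_⟩
  rw [mem_dynEntourage]
  intro k hkn
  simp only [mem_setOf_eq]
  rw [dist_comm]
  rw [Subtype.dist_eq, fmap_iter, fmap_iter, emb_coe htI]
  calc |cl 1 (lm 1 4 k (t:ℝ)) - cl 1 (lm 1 4 k (x:ℝ))|
      = |cl 1 (lm 1 4 k (x:ℝ)) - cl 1 (lm 1 4 k (t:ℝ))| := abs_sub_comm _ _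
    _ ≤ ε/2 := hk k hkn
    _ < ε := half_lt_self hε

lemma fmap_entropy : coverEntropy (⇑fmap) Set.univ = 0 :=
  coverEntropy_eq_zero_of_linear_cover fmap fmap_cover

/-- the real function of the second map `g`. -/
noncomputable def gr (x : ℝ) : ℝ := min (1/2) (max (1/2 - 2*x) (max 0 (2*x - 1)))

lemma gr_mem (x : ℝ) : gr x ∈ Icc (0:ℝ) (1/2) := by
  constructor
  · exact le_min (by norm_num) (le_max_of_le_right (le_max_left _ _))
  · exact min_le_left _ _

lemma gr_eval1 {x : ℝ} (h0 : 0 ≤ x) (h1 : x ≤ 1/4) : gr x = 1/2 - 2*x := by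
  simp only [gr, min_def, max_def]
  split_ifs <;> linarith

lemma gr_eval2 {x : ℝ} (h0 : 1/4 ≤ x) (h1 : x ≤ 1/2) : gr x = 0 := by
  simp only [gr, min_def, max_def]
  split_ifs <;> linarith

lemma gr_eval3 {x : ℝ} (h0 : 1/2 ≤ x) (h1 : x ≤ 3/4) : gr x = 2*x - 1 := by
  simp only [gr, min_def, max_def]
  split_ifs <;> linarith

lemma gr_eval4 {x : ℝ} (h0 : 3/4 ≤ x) : gr x = 1/2 := by
  simp only [gr, min_def, max_def]
  split_ifs <;> linarith

lemma gr_on_half {y : ℝ} (h : y ∈ Icc (0:ℝ) (1/2)) : gr y = cl (1/2) (1/2 - 2*y) := by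
  obtain ⟨h0, h1⟩ := h
  simp only [gr, cl, min_def, max_def]
  split_ifs <;> linarith

lemma gr_cl2 (z : ℝ) : gr (cl (1/2) z) = cl (1/2) (1/2 - 2*z) := by
  rw [gr_on_half (cl_mem (by norm_num) z)]
  exact cl_step (by norm_num) (by norm_num) z

/-- the map `g` through `(0,1/2), (1/4,0), (1/2,0), (3/4,1/2), (1,1/2)`. -/
noncomputable def gmap : C(I, I) :=
  ⟨fun x => emb (gr (x:ℝ)), by
    apply Continuous.subtype_mk
    apply continuous_const.max
    apply continuous_const.min
    apply continuous_const.min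
    apply Continuous.max
    · exact continuous_const.sub (continuous_const.mul continuous_subtype_val)
    · exact continuous_const.max
        ((continuous_const.mul continuous_subtype_val).sub continuous_const)⟩

lemma gmap_coe (x : I) : (gmap x : ℝ) = gr (x:ℝ) := by
  apply emb_coe
  have h := gr_mem (x:ℝ)
  exact ⟨h.1, h.2.trans (by norm_num)⟩

lemma gmap_iter (x : I) (k : ℕ) :
    (((⇑gmap)^[k+1] x : I) : ℝ) = cl (1/2) (lm (1/2) 2 k (gr (x:ℝ))) := by
  induction k with
  | zero =>
    rw [Function.iterate_one, gmap_coe, lm_zero, cl_of_mem (gr_mem (x:ℝ))]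
  | succ k ih =>
    rw [Function.iterate_succ_apply', gmap_coe, ih, gr_cl2,
      ← lm_succ (by norm_num : (1:ℝ) ≤ 2)]

lemma gmap_ball {ε : ℝ} (hε : 0 < ε) {n : ℕ} (x y : I)
    (h0 : |(y:ℝ) - (x:ℝ)| ≤ ε/2)
    (h1 : ∀ m < n, |cl (1/2) (lm (1/2) 2 m (gr (y:ℝ))) - cl (1/2) (lm (1/2) 2 m (gr (x:ℝ)))| ≤ ε/2) :
    (x, y) ∈ dynEntourage (⇑gmap) {p : I × I | dist p.1 p.2 < ε} n := by
  rw [mem_dynEntourage]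
  intro k hk
  simp only [mem_setOf_eq]
  rw [dist_comm]
  rcases k with _ | m
  · simpa [Function.iterate_zero_apply, Subtype.dist_eq, Real.dist_eq]
      using lt_of_le_of_lt h0 (half_lt_self hε)
  · rw [Subtype.dist_eq, Real.dist_eq, gmap_iter, gmap_iter]
    exact lt_of_le_of_lt (h1 m (by omega)) (half_lt_self hε)

lemma grid_pick {ε a x : ℝ} (hε : 0 < ε) {N : ℕ} (ha : a ≤ x) (hN : x - a ≤ (N:ℝ)*ε) :
    ∃ j : ℕ, j < N+1 ∧ a + (j:ℝ)*ε ≤ x ∧ x - (a + (j:ℝ)*ε) ≤ ε := by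
  refine ⟨⌊(x - a)/ε⌋₊, ?_, ?_, ?_⟩
  · rw [Nat.lt_succ_iff]
    have h1 : (x - a)/ε ≤ (N:ℝ) := by
      rw [div_le_iff₀ hε]; linarith [hN]
    calc ⌊(x - a)/ε⌋₊ ≤ ⌊(N:ℝ)⌋₊ := Nat.floor_mono h1
      _ = N := Nat.floor_natCast N
  · have : (⌊(x - a)/ε⌋₊ : ℝ) * ε ≤ ((x - a)/ε) * ε :=
      mul_le_mul_of_nonneg_right (Nat.floor_le (div_nonneg (by linarith) hε.le)) hε.le
    rw [div_mul_cancel₀ _ hε.ne'] at this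
    linarith
  · have := Nat.lt_floor_add_one ((x - a)/ε)
    rw [div_lt_iff₀ hε] at this
    nlinarith

set_option maxHeartbeats 1600000 in
lemma gmap_cover : ∀ ε : ℝ, 0 < ε → ∃ C : ℕ, 0 < C ∧ ∀ n : ℕ, ∃ s : Finset I,
    s.card ≤ C * (n+1) ∧
    IsDynCoverOf (⇑gmap) Set.univ {p : I × I | dist p.1 p.2 < ε} n s := by
  intro ε hε
  have hε2 : 0 < ε/2 := half_pos hε
  obtain ⟨C, hC, hspan⟩ := shared_span (show (0:ℝ) < 1/2 by norm_num)
    (show (1:ℝ) ≤ 2 by norm_num) hε2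
  obtain ⟨N, hN⟩ : ∃ N : ℕ, 1/4 ≤ (N:ℝ) * (ε/2) := by
    refine ⟨⌈(1/4)/(ε/2)⌉₊, ?_⟩
    rw [← div_le_iff₀ hε2]
    exact Nat.le_ceil _
  refine ⟨2*C + 2*(N+1), by omega, fun n => ?_⟩
  obtain ⟨ts, hsub, hcard, hts⟩ := hspan n
  refine ⟨(ts.image (fun t => emb (1/4 - t/2))) ∪ (ts.image (fun t => emb ((1+t)/2))) ∪
    ((Finset.range (N+1)).image (fun j : ℕ => emb (1/4 + (j:ℝ)*(ε/2)))) ∪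
    ((Finset.range (N+1)).image (fun j : ℕ => emb (3/4 + (j:ℝ)*(ε/2)))), ?_, ?_⟩
  · have h1 := (Finset.card_image_le (s := ts) (f := fun t => emb (1/4 - t/2))).trans hcard
    have h2 := (Finset.card_image_le (s := ts) (f := fun t => emb ((1+t)/2))).trans hcard
    have h3 := Finset.card_image_le (s := Finset.range (N+1))
      (f := fun j => emb (1/4 + (j:ℝ)*(ε/2)))
    have h4 := Finset.card_image_le (s := Finset.range (N+1))
      (f := fun j => emb (3/4 + (j:ℝ)*(ε/2)))
    rw [Finset.card_range] at h3 h4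
    have hu1 := Finset.card_union_le (ts.image (fun t => emb (1/4 - t/2)))
      (ts.image (fun t => emb ((1+t)/2)))
    have hu2 := Finset.card_union_le
      ((ts.image (fun t => emb (1/4 - t/2))) ∪ (ts.image (fun t => emb ((1+t)/2))))
      ((Finset.range (N+1)).image (fun j : ℕ => emb (1/4 + (j:ℝ)*(ε/2))))
    have hu3 := Finset.card_union_le
      ((ts.image (fun t => emb (1/4 - t/2))) ∪ (ts.image (fun t => emb ((1+t)/2))) ∪
        ((Finset.range (N+1)).image (fun j : ℕ => emb (1/4 + (j:ℝ)*(ε/2)))))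
      ((Finset.range (N+1)).image (fun j : ℕ => emb (3/4 + (j:ℝ)*(ε/2))))
    have hn1 : 1 ≤ n + 1 := by omega
    calc _ ≤ _ := hu3
      _ ≤ _ := by exact Nat.add_le_add hu2 (le_refl _)
      _ ≤ (C*(n+1) + C*(n+1)) + (N+1) + (N+1) := by omega
      _ ≤ (2*C + 2*(N+1)) * (n+1) := by nlinarith
  · intro x _
    have hx0 : (0:ℝ) ≤ (x:ℝ) := x.2.1
    have hx1 : (x:ℝ) ≤ 1 := x.2.2
    rcases le_or_gt (x:ℝ) (1/4) with hc1 | hc1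
    · -- branch [0, 1/4]
      have hu : gr (x:ℝ) = 1/2 - 2*(x:ℝ) := gr_eval1 hx0 hc1
      obtain ⟨t, htts, hclose, hk⟩ := hts (gr (x:ℝ)) (gr_mem _)
      have htm : t ∈ Icc (0:ℝ) (1/2) := hsub htts
      have hyc : (emb (1/4 - t/2) : ℝ) = 1/4 - t/2 := by
        apply emb_coe
        constructor <;> [linarith [htm.2]; linarith [htm.1]]
      refine ⟨emb (1/4 - t/2), ?_, gmap_ball hε _ _ ?_ ?_⟩
      · apply Finset.mem_union_left; apply Finset.mem_union_left; apply Finset.mem_union_left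
        exact Finset.mem_image_of_mem _ htts
      · rw [hyc]
        rw [abs_le] at hclose ⊢
        rw [hu] at hclose
        constructor <;> [nlinarith [hclose.1, hclose.2]; nlinarith [hclose.1, hclose.2]]
      · intro m hm
        have hgy : gr ((emb (1/4 - t/2) : I) : ℝ) = t := by
          rw [hyc, gr_eval1 (by linarith [htm.2]) (by linarith [htm.1])]
          ring
        rw [hgy]
        calc |cl (1/2) (lm (1/2) 2 m t) - cl (1/2) (lm (1/2) 2 m (gr (x:ℝ)))|
            = |cl (1/2) (lm (1/2) 2 m (gr (x:ℝ))) - cl (1/2) (lm (1/2) 2 m t)| := abs_sub_comm _ _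
          _ ≤ ε/2 := hk m hm
    · rcases le_or_gt (x:ℝ) (1/2) with hc2 | hc2
      · -- branch (1/4, 1/2] : g vanishes
        obtain ⟨j, hjN, hj1, hj2⟩ := grid_pick hε2 (le_of_lt hc1)
          (by linarith : (x:ℝ) - 1/4 ≤ (N:ℝ)*(ε/2))
        have hyc : (emb (1/4 + (j:ℝ)*(ε/2)) : ℝ) = 1/4 + (j:ℝ)*(ε/2) := by
          apply emb_coe
          have hj0 : (0:ℝ) ≤ (j:ℝ)*(ε/2) := by positivity
          constructor <;> linarith
        refine ⟨emb (1/4 + (j:ℝ)*(ε/2)), ?_, gmap_ball hε _ _ ?_ ?_⟩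
        · apply Finset.mem_union_left; apply Finset.mem_union_right
          exact Finset.mem_image_of_mem _ (Finset.mem_range.2 hjN)
        · rw [hyc, abs_le]
          constructor <;> linarith
        · intro m hm
          have hj0 : (0:ℝ) ≤ (j:ℝ)*(ε/2) := by positivity
          have hgy : gr ((emb (1/4 + (j:ℝ)*(ε/2)) : I) : ℝ) = 0 := by
            rw [hyc]; exact gr_eval2 (by linarith) (by linarith)
          rw [hgy, gr_eval2 (le_of_lt hc1) hc2, sub_self, abs_zero]
          exact hε2.le
      · rcases le_or_gt (x:ℝ) (3/4) with hc3 | hc3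
        · -- branch (1/2, 3/4]
          have hu : gr (x:ℝ) = 2*(x:ℝ) - 1 := gr_eval3 (le_of_lt hc2) hc3
          obtain ⟨t, htts, hclose, hk⟩ := hts (gr (x:ℝ)) (gr_mem _)
          have htm : t ∈ Icc (0:ℝ) (1/2) := hsub htts
          have hyc : (emb ((1+t)/2) : ℝ) = (1+t)/2 := by
            apply emb_coe
            constructor <;> [linarith [htm.1]; linarith [htm.2]]
          refine ⟨emb ((1+t)/2), ?_, gmap_ball hε _ _ ?_ ?_⟩
          · apply Finset.mem_union_left; apply Finset.mem_union_left
            apply Finset.mem_union_right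
            exact Finset.mem_image_of_mem _ htts
          · rw [hyc]
            rw [abs_le] at hclose ⊢
            rw [hu] at hclose
            constructor <;> [nlinarith [hclose.1, hclose.2]; nlinarith [hclose.1, hclose.2]]
          · intro m hm
            have hgy : gr ((emb ((1+t)/2) : I) : ℝ) = t := by
              rw [hyc, gr_eval3 (by linarith [htm.1]) (by linarith [htm.2])]
              ring
            rw [hgy]
            calc |cl (1/2) (lm (1/2) 2 m t) - cl (1/2) (lm (1/2) 2 m (gr (x:ℝ)))|
                = |cl (1/2) (lm (1/2) 2 m (gr (x:ℝ))) - cl (1/2) (lm (1/2) 2 m t)| :=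
                  abs_sub_comm _ _
              _ ≤ ε/2 := hk m hm
        · -- branch (3/4, 1]
          obtain ⟨j, hjN, hj1, hj2⟩ := grid_pick hε2 (le_of_lt hc3)
            (by linarith : (x:ℝ) - 3/4 ≤ (N:ℝ)*(ε/2))
          have hj0 : (0:ℝ) ≤ (j:ℝ)*(ε/2) := by positivity
          have hyc : (emb (3/4 + (j:ℝ)*(ε/2)) : ℝ) = 3/4 + (j:ℝ)*(ε/2) := by
            apply emb_coe
            constructor <;> linarith
          refine ⟨emb (3/4 + (j:ℝ)*(ε/2)), ?_, gmap_ball hε _ _ ?_ ?_⟩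
          · apply Finset.mem_union_right
            exact Finset.mem_image_of_mem _ (Finset.mem_range.2 hjN)
          · rw [hyc, abs_le]
            constructor <;> linarith
          · intro m hm
            have hgy : gr ((emb (3/4 + (j:ℝ)*(ε/2)) : I) : ℝ) = 1/2 := by
              rw [hyc]; exact gr_eval4 (by linarith)
            rw [hgy, gr_eval4 (le_of_lt hc3), sub_self, abs_zero]
            exact hε2.le

lemma gmap_entropy : coverEntropy (⇑gmap) Set.univ = 0 :=
  coverEntropy_eq_zero_of_linear_cover gmap gmap_cover

noncomputable def phi : C(I, I) := midMap fmap gmap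

lemma phi_coe (x : I) : (phi x : ℝ) = (cl 1 (1 - 4*(x:ℝ)) + gr (x:ℝ))/2 := by
  rw [show (phi x : ℝ) = ((fmap x : ℝ) + (gmap x : ℝ))/2 from rfl, gmap_coe]
  rfl

lemma phi_eval1 (x : I) (h : (x:ℝ) ≤ 1/4) : (phi x : ℝ) = 3/4 - 3*(x:ℝ) := by
  rw [phi_coe, cl_of_mem ⟨by linarith, by linarith [x.2.1]⟩, gr_eval1 x.2.1 h]
  ring

lemma phi_eval2 (x : I) (h1 : 1/4 ≤ (x:ℝ)) (h2 : (x:ℝ) ≤ 1/2) : (phi x : ℝ) = 0 := by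
  rw [phi_coe, cl_of_nonpos (by linarith), gr_eval2 h1 h2]
  ring

lemma phi_eval3 (x : I) (h1 : 1/2 ≤ (x:ℝ)) (h2 : (x:ℝ) ≤ 3/4) : (phi x : ℝ) = (x:ℝ) - 1/2 := by
  rw [phi_coe, cl_of_nonpos (by linarith), gr_eval3 h1 h2]
  ring

lemma phi_eval4 (x : I) (h : 3/4 ≤ (x:ℝ)) : (phi x : ℝ) = 1/4 := by
  rw [phi_coe, cl_of_nonpos (by linarith), gr_eval4 h]
  ring

lemma phi_hA {y : ℝ} (h : y ∈ Icc (0:ℝ) (3/4)) : phi (emb (1/4 - y/3)) = emb y := by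
  have hmem : (1/4 - y/3) ∈ Icc (0:ℝ) 1 := ⟨by linarith [h.2], by linarith [h.1]⟩
  apply Subtype.ext
  rw [phi_eval1 _ (by rw [emb_coe hmem]; linarith [h.1]), emb_coe hmem,
    emb_coe ⟨h.1, by linarith [h.2]⟩]
  ring

lemma phi_hB {y : ℝ} (h : y ∈ Icc (0:ℝ) (1/4)) : phi (emb (y + 1/2)) = emb y := by
  have hmem : (y + 1/2) ∈ Icc (0:ℝ) 1 := ⟨by linarith [h.1], by linarith [h.2]⟩
  apply Subtype.ext
  rw [phi_eval3 _ (by rw [emb_coe hmem]; linarith [h.1]) (by rw [emb_coe hmem]; linarith [h.2]),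
    emb_coe hmem, emb_coe ⟨h.1, by linarith [h.2]⟩]
  ring

/-- itinerary points for the horseshoe: each `Bool` encodes a block of two symbols,
`true ↦ (B, A)` and `false ↦ (A, A)` for the intervals `A = [0,1/4]`, `B = [1/2,3/4]`. -/
noncomputable def pt : List Bool → ℝ
  | [] => 0
  | true :: w => (1/4 - pt w/3) + 1/2
  | false :: w => 1/4 - (1/4 - pt w/3)/3

lemma pt_mem : ∀ w : List Bool, pt w ∈ Icc (0:ℝ) (3/4)
  | [] => by norm_num [pt]
  | true :: w => by
      have h := pt_mem w
      simp only [pt]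
      constructor <;> linarith [h.1, h.2]
  | false :: w => by
      have h := pt_mem w
      simp only [pt]
      constructor <;> linarith [h.1, h.2]

lemma pt_coe (w : List Bool) : (emb (pt w) : ℝ) = pt w :=
  emb_coe ⟨(pt_mem w).1, (pt_mem w).2.trans (by norm_num)⟩

lemma pt_cons_true (w : List Bool) : pt (true :: w) ∈ Icc (1/2:ℝ) (3/4) := by
  have h := pt_mem w
  simp only [pt]
  constructor <;> linarith [h.1, h.2]

lemma pt_cons_false (w : List Bool) : pt (false :: w) ∈ Icc (0:ℝ) (1/4) := by
  have h := pt_mem w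
  simp only [pt]
  constructor <;> linarith [h.1, h.2]

lemma phi_two_step (b : Bool) (w : List Bool) :
    (⇑phi)^[2] (emb (pt (b :: w))) = emb (pt w) := by
  have hy := pt_mem w
  have hy' : (1/4 - pt w / 3) ∈ Icc (0:ℝ) (1/4) := ⟨by linarith [hy.2], by linarith [hy.1]⟩
  have h1 : phi (emb (pt (b :: w))) = emb (1/4 - pt w/3) := by
    cases b
    · show phi (emb (1/4 - (1/4 - pt w/3)/3)) = _
      exact phi_hA ⟨hy'.1, by linarith [hy'.2]⟩
    · show phi (emb ((1/4 - pt w/3) + 1/2)) = _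
      exact phi_hB hy'
  rw [show (2:ℕ) = 1 + 1 from rfl, Function.iterate_add_apply, Function.iterate_one, h1]
  exact phi_hA hy

lemma phi_iter_drop : ∀ (i : ℕ) (w : List Bool), i ≤ w.length →
    (⇑phi)^[2*i] (emb (pt w)) = emb (pt (w.drop i)) := by
  intro i
  induction i with
  | zero => intro w _; simp
  | succ i ih =>
    intro w hw
    cases w with
    | nil => simp at hw
    | cons b w' =>
      rw [show 2*(i+1) = 2*i + 2 by ring, Function.iterate_add_apply, phi_two_step,
        ih w' (by simpa using hw), List.drop_succ_cons]

lemma phi_sep : ∀ (w1 w2 : List Bool), w1.length = w2.length → w1 ≠ w2 →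
    ∃ i, i < w1.length ∧
      1/4 ≤ dist ((⇑phi)^[2*i] (emb (pt w1))) ((⇑phi)^[2*i] (emb (pt w2))) := by
  intro w1
  induction w1 with
  | nil =>
    intro w2 hl hne
    exfalso
    cases w2 with
    | nil => exact hne rfl
    | cons b t => simp at hl
  | cons b1 t1 ih =>
    intro w2 hl hne
    cases w2 with
    | nil => simp at hl
    | cons b2 t2 =>
      by_cases hb : b1 = b2
      · subst hb
        have ht : t1 ≠ t2 := fun h => hne (by rw [h])
        obtain ⟨i, hi, hd⟩ := ih t2 (by simpa using hl) ht
        refine ⟨i+1, by simpa using Nat.succ_lt_succ hi, ?_⟩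
        rw [show 2*(i+1) = 2*i + 2 by ring, Function.iterate_add_apply,
          Function.iterate_add_apply, phi_two_step, phi_two_step]
        exact hd
      · refine ⟨0, by simp, ?_⟩
        simp only [mul_zero, Function.iterate_zero_apply]
        rw [Subtype.dist_eq, pt_coe, pt_coe, Real.dist_eq]
        cases b1
        · cases b2
          · exact absurd rfl hb
          · have h1 := pt_cons_false t1
            have h2 := pt_cons_true t2
            rw [le_abs]
            right
            linarith [h1.2, h2.1]
        · cases b2
          · have h1 := pt_cons_true t1
            have h2 := pt_cons_false t2
            rw [le_abs]
            left
            linarith [h1.1, h2.2]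
          · exact absurd rfl hb

open Filter Uniformity in
lemma phi_entropy_pos : 0 < coverEntropy (⇑phi) Set.univ := by
  have hU : {p : I × I | dist p.1 p.2 < 1/10} ∈ 𝓤 I := Metric.dist_mem_uniformity (by norm_num)
  set U : Set (I × I) := {p : I × I | dist p.1 p.2 < 1/10} with hUdef
  have hnet : ∀ n : ℕ, ((2^(n/2) : ℕ) : ℕ∞) ≤ netMaxcard ⇑phi Set.univ U n := by
    intro n
    set m := n/2 with hm
    have hinj : Function.Injective (fun b : Fin m → Bool => emb (pt (List.ofFn b))) := by
      intro b1 b2 h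
      by_contra hne
      have hlist : List.ofFn b1 ≠ List.ofFn b2 := fun hh => hne (List.ofFn_injective hh)
      obtain ⟨i, _, hd⟩ := phi_sep _ _ (by simp) hlist
      simp only [h] at hd
      rw [dist_self] at hd
      norm_num at hd
    have hnetin : IsDynNetIn (⇑phi) Set.univ U (2*m)
        ((Finset.univ : Finset (Fin m → Bool)).image
          (fun b => emb (pt (List.ofFn b)))) := by
      refine ⟨subset_univ _, ?_⟩
      intro x hx y hy hxy
      simp only [Finset.coe_image, Finset.coe_univ, Set.image_univ, mem_range] at hx hy
      obtain ⟨b1, rfl⟩ := hx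
      obtain ⟨b2, rfl⟩ := hy
      have hb : List.ofFn b1 ≠ List.ofFn b2 := by
        intro h
        exact hxy (by rw [List.ofFn_injective h])
      obtain ⟨i, hi, hd⟩ := phi_sep _ _ (by simp) hb
      rw [List.length_ofFn] at hi
      simp only [Function.onFun]
      rw [Set.disjoint_left]
      intro z hz1 hz2
      rw [UniformSpace.ball, mem_preimage, mem_dynEntourage] at hz1 hz2
      have h1 := hz1 (2*i) (by omega)
      have h2 := hz2 (2*i) (by omega)
      simp only [hUdef, mem_setOf_eq] at h1 h2
      have htri := dist_triangle ((⇑phi)^[2*i] (emb (pt (List.ofFn b1))))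
        ((⇑phi)^[2*i] z) ((⇑phi)^[2*i] (emb (pt (List.ofFn b2))))
      rw [dist_comm ((⇑phi)^[2*i] z)] at htri
      linarith
    have hle := (hnetin.of_le (show 2*m ≤ n by omega)).card_le_netMaxcard
    refine le_trans ?_ hle
    have hcard : ((Finset.univ : Finset (Fin m → Bool)).image
        (fun b => emb (pt (List.ofFn b)))).card = 2^m := by
      rw [Finset.card_image_of_injective _ hinj, Finset.card_univ]
      simp
    rw [hcard]
  have hlog2 : (0:ℝ) < Real.log 2 := Real.log_pos one_lt_two
  have hlog : ∀ n : ℕ, 2 ≤ n →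
      ((Real.log 2/4 : ℝ) : EReal) ≤ ENNReal.log (netMaxcard ⇑phi Set.univ U n) / (n : EReal) := by
    intro n hn
    have h1 : ENNReal.log (((2^(n/2) : ℕ) : ℕ∞) : ENNReal)
        ≤ ENNReal.log (netMaxcard ⇑phi Set.univ U n) :=
      ENNReal.log_monotone (ENat.toENNReal_mono (hnet n))
    have h2 : ENNReal.log (((2^(n/2) : ℕ) : ℕ∞) : ENNReal) = ((Real.log (2^(n/2)) : ℝ) : EReal) := by
      rw [ENat.toENNReal_coe, ← ENNReal.ofReal_natCast, ENNReal.log_ofReal_of_pos (by positivity)]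
      norm_num
    have h3 : ((Real.log 2/4 : ℝ) : EReal) ≤ ((Real.log (2^(n/2)) / n : ℝ) : EReal) := by
      rw [EReal.coe_le_coe_iff, Real.log_pow]
      have h4 : (n:ℝ)/4 ≤ ((n/2 : ℕ) : ℝ) := by
        have : n ≤ 4 * (n/2) := by omega
        have h5 : (n:ℝ) ≤ 4*((n/2 : ℕ):ℝ) := by exact_mod_cast this
        linarith
      rw [div_le_div_iff₀ (by norm_num) (by positivity)]
      have h6 : (0:ℝ) ≤ (n:ℝ) := by positivity
      nlinarith
    refine le_trans h3 ?_
    rw [show ((Real.log (2^(n/2)) / n : ℝ) : EReal)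
        = ((Real.log (2^(n/2)) : ℝ) : EReal) / (n : EReal) by
      rw [EReal.coe_div, EReal.coe_coe_eq_natCast], ← h2]
    exact EReal.monotone_div_right_of_nonneg (by exact_mod_cast Nat.cast_nonneg' n) h1
  have hlim : ((Real.log 2/4 : ℝ) : EReal) ≤ netEntropyEntourage ⇑phi Set.univ U :=
    le_limsup_of_frequently_le' ((eventually_atTop.2 ⟨2, hlog⟩).frequently)
  have hpos : (0:EReal) < ((Real.log 2/4 : ℝ) : EReal) := by
    rw [show (0:EReal) = ((0:ℝ):EReal) from rfl, EReal.coe_lt_coe_iff]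
    positivity
  exact lt_of_lt_of_le hpos
    (hlim.trans (netEntropyEntourage_le_coverEntropy ⇑phi Set.univ hU))

lemma phi_zero : phi (0 : I) = emb (3/4) := by
  apply Subtype.ext
  have h0 : ((0:I):ℝ) = 0 := rfl
  rw [phi_eval1 _ (by rw [h0]; norm_num), emb_coe (by norm_num), h0]
  norm_num

lemma phi_34 : phi (emb (3/4)) = emb (1/4) := by
  apply Subtype.ext
  have h1 : (emb (3/4) : ℝ) = 3/4 := emb_coe (by norm_num)
  rw [phi_eval4 _ (by rw [h1]), emb_coe (by norm_num)]

lemma phi_14 : phi (emb (1/4)) = (0 : I) := by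
  apply Subtype.ext
  have h1 : (emb (1/4) : ℝ) = 1/4 := emb_coe (by norm_num)
  rw [phi_eval2 _ (by rw [h1]) (by rw [h1]; norm_num)]
  rfl

lemma phi_period : Function.minimalPeriod (⇑phi) 0 = 3 := by
  have hper : Function.IsPeriodicPt (⇑phi) 3 0 := by
    show (⇑phi)^[3] 0 = 0
    rw [show (3:ℕ) = 2+1 from rfl, Function.iterate_add_apply, Function.iterate_one,
      Function.iterate_succ_apply', Function.iterate_one, phi_zero, phi_34, phi_14]
  have hdvd := Function.IsPeriodicPt.minimalPeriod_dvd hper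
  rcases (Nat.prime_three.eq_one_or_self_of_dvd _ hdvd) with h | h
  · exfalso
    have h1 := Function.iterate_minimalPeriod (f := ⇑phi) (x := (0:I))
    rw [h, Function.iterate_one, phi_zero] at h1
    have h2 : (emb (3/4) : ℝ) = ((0:I) : ℝ) := congrArg _ h1
    rw [emb_coe (by norm_num)] at h2
    norm_num at h2
  · exact h

end NotConvex

/-- The set `E_{≤ 0} = {f : h_top(f) = 0}` is not convex: taking `f` to be the broken line
map through `(0,1), (1/4,0), (1,0)` and `g` the broken line map through
`(0,1/2), (1/4,0), (1/2,0), (3/4,1/2), (1,1/2)`, both have entropy `0`, while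
`φ = (1/2) f + (1/2) g` has `0` as a periodic point of (minimal) period `3`, and
`h_top(φ) > 0`. -/
theorem E_le_zero_not_convex :
    ∃ f g : C(I, I),
      (∀ x : I, (x : ℝ) ≤ 1 / 4 → (f x : ℝ) = 1 - 4 * (x : ℝ)) ∧
      (∀ x : I, 1 / 4 ≤ (x : ℝ) → (f x : ℝ) = 0) ∧
      (∀ x : I, (x : ℝ) ≤ 1 / 4 → (g x : ℝ) = 1 / 2 - 2 * (x : ℝ)) ∧
      (∀ x : I, 1 / 4 ≤ (x : ℝ) → (x : ℝ) ≤ 1 / 2 → (g x : ℝ) = 0) ∧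
      (∀ x : I, 1 / 2 ≤ (x : ℝ) → (x : ℝ) ≤ 3 / 4 → (g x : ℝ) = 2 * ((x : ℝ) - 1 / 2)) ∧
      (∀ x : I, 3 / 4 ≤ (x : ℝ) → (g x : ℝ) = 1 / 2) ∧
      htop f = 0 ∧ htop g = 0 ∧
      Function.minimalPeriod ⇑(midMap f g) 0 = 3 ∧
      0 < htop (midMap f g) := by
  refine ⟨NotConvex.fmap, NotConvex.gmap, ?_, ?_, ?_, ?_, ?_, ?_, ?_, ?_, ?_, ?_⟩
  · intro x h
    rw [show (NotConvex.fmap x : ℝ) = NotConvex.cl 1 (1 - 4*(x:ℝ)) from rfl,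
      NotConvex.cl_of_mem ⟨by linarith, by linarith [x.2.1]⟩]
  · intro x h
    rw [show (NotConvex.fmap x : ℝ) = NotConvex.cl 1 (1 - 4*(x:ℝ)) from rfl,
      NotConvex.cl_of_nonpos (by linarith)]
  · intro x h
    rw [NotConvex.gmap_coe, NotConvex.gr_eval1 x.2.1 h]
  · intro x h1 h2
    rw [NotConvex.gmap_coe, NotConvex.gr_eval2 h1 h2]
  · intro x h1 h2
    rw [NotConvex.gmap_coe, NotConvex.gr_eval3 h1 h2]
    ring
  · intro x h
    rw [NotConvex.gmap_coe, NotConvex.gr_eval4 h]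
  · exact NotConvex.fmap_entropy
  · exact NotConvex.gmap_entropy
  · exact NotConvex.phi_period
  · exact NotConvex.phi_entropy_pos
end

section
/- For every real number a ≥ 0, there exists a continuous map H : C(𝕀) × [0,1] → C(𝕀) (a homotopy), written H_t(f) = H(f,t), such that: (1) H_0(f) = f for every f ∈ C(𝕀); (2) h_top(H_t(f)) ≥ a for every t ∈ (0,1] and every f ∈ C(𝕀); (3) H_1 is a constant map, i.e., H_1(f) = H_1(g) for all f, g ∈ C(𝕀). -/
/-!
Smooth `f` at scale `t` by the inf-convolution `x ↦ inf_y (f y + |x - y| / t)`, which is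
`1/t`-Lipschitz and converges uniformly to `f` as `t → 0`, and pull the result towards the
identity: `g = (1 - t) • (smoothing) + t • id`. The map `g` has a fixed point, and its Lipschitz
bound keeps it within `t/8` of the diagonal on a window of length `t²/32` around that point.
Adding the cosine comb `max 0 (t/2 - |g x - x|) · cos (π x / λ)` with a fixed wavelength
`λ ≍ t²/N` makes `N` teeth inside the window each cover the window: a horseshoe with `N` branches,
so `h_top ≥ log N`. The comb moves `g` by at most `t/2`, which gives continuity at `t = 0`; at
`t = 1` we have `g = id`, so the map no longer depends on `f`. No choice of fixed point enters the
construction, so it depends continuously on `f`.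
-/

open unitInterval

open Set Filter Topology Dynamics ExpGrowth
open scoped ENNReal Real

section Horseshoe

variable {X : Type*} {T : X → X} {N : ℕ} {J : Fin N → Set X}

theorem exists_iterate_mem_of_subset_image (hne : ∀ i, (J i).Nonempty)
    (himg : ∀ i j, J j ⊆ T '' J i) (w : ℕ → Fin N) (n : ℕ) :
    ∃ x ∈ J (w 0), ∀ k ≤ n, T^[k] x ∈ J (w k) := by
  induction n generalizing w with
  | zero =>
    obtain ⟨x, hx⟩ := hne (w 0)
    exact ⟨x, hx, fun k hk => by rwa [Nat.le_zero.1 hk]⟩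
  | succ n ih =>
    obtain ⟨y, hy, hyw⟩ := ih (fun k => w (k + 1))
    obtain ⟨x, hx, rfl⟩ := himg (w 0) (w 1) hy
    refine ⟨x, hx, fun k hk => ?_⟩
    rcases k with _ | k
    · exact hx
    · rw [Function.iterate_succ_apply]
      exact hyw k (by omega)

variable [PseudoMetricSpace X] {ε : ℝ}

structure IsHorseshoe (T : X → X) (J : Fin N → Set X) (ε : ℝ) : Prop where
  nonempty : ∀ i, (J i).Nonempty
  subset_image : ∀ i j, J j ⊆ T '' J i
  le_dist : ∀ i j, i ≠ j → ∀ x ∈ J i, ∀ y ∈ J j, ε ≤ dist x y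

theorem IsHorseshoe.pow_le_netMaxcard (h : IsHorseshoe T J ε) (hε : 0 < ε) (hN : 0 < N)
    (n : ℕ) : (N ^ n : ℕ∞) ≤ netMaxcard T univ {p : X × X | dist p.1 p.2 < ε / 2} n := by
  classical
  have hfollow : ∀ w : Fin n → Fin N, ∃ x, ∀ k : Fin n, T^[k] x ∈ J (w k) := by
    intro w
    obtain ⟨x, -, hx⟩ := exists_iterate_mem_of_subset_image h.nonempty h.subset_image
      (fun k => if hk : k < n then w ⟨k, hk⟩ else ⟨0, hN⟩) n
    exact ⟨x, fun k => by simpa [k.isLt] using hx k k.isLt.le⟩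
  choose x hx using hfollow
  have hfar : ∀ v w, v ≠ w → ∃ k : Fin n, ε ≤ dist (T^[k] (x v)) (T^[k] (x w)) := by
    intro v w hvw
    obtain ⟨k, hk⟩ := Function.ne_iff.1 hvw
    exact ⟨k, h.le_dist _ _ hk _ (hx v k) _ (hx w k)⟩
  have hinj : Function.Injective x := fun v w hvw => by
    by_contra hne
    obtain ⟨k, hk⟩ := hfar v w hne
    rw [hvw, dist_self] at hk
    linarith
  have hnet : IsDynNetIn T univ {p : X × X | dist p.1 p.2 < ε / 2} n
      (Finset.univ.image x : Set X) := by
    refine ⟨subset_univ _, ?_⟩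
    simp only [Finset.coe_image, Finset.coe_univ, image_univ]
    rintro _ ⟨v, rfl⟩ _ ⟨w, rfl⟩ hvw
    obtain ⟨k, hk⟩ := hfar v w (fun h => hvw (h ▸ rfl))
    refine disjoint_left.2 fun z hzv hzw => ?_
    have hv := (mem_ball_dynEntourage.1 hzv) k k.isLt
    have hw := (mem_ball_dynEntourage.1 hzw) k k.isLt
    simp only [UniformSpace.ball, mem_preimage, mem_ofPred_eq] at hv hw
    linarith [dist_triangle_right (T^[k] (x v)) (T^[k] (x w)) (T^[k] z)]
  calc (N ^ n : ℕ∞) = (Finset.univ.image x).card := by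
        rw [Finset.card_image_of_injective _ hinj]; simp
    _ ≤ _ := hnet.card_le_netMaxcard

theorem IsHorseshoe.log_le_coverEntropy (h : IsHorseshoe T J ε) (hε : 0 < ε) :
    ENNReal.log N ≤ coverEntropy T univ := by
  obtain rfl | hN := N.eq_zero_or_pos
  · simp
  calc ENNReal.log N = expGrowthSup fun n => (N : ℝ≥0∞) ^ n := expGrowthSup_pow.symm
    _ ≤ netEntropyEntourage T univ {p : X × X | dist p.1 p.2 < ε / 2} :=
        expGrowthSup_monotone fun n => by
          simpa using ENat.toENNReal_le.2 (h.pow_le_netMaxcard hε hN n)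
    _ ≤ coverEntropy T univ :=
        netEntropyEntourage_le_coverEntropy T univ (Metric.dist_mem_uniformity (half_pos hε))

end Horseshoe

section InfConv

variable {X : Type*} [PseudoMetricSpace X] {φ ψ : X → ℝ} {K K' c : ℝ} {x x' : X}

noncomputable def infConv (φ : X → ℝ) (K : ℝ) (x : X) : ℝ := ⨅ y, φ y + K * dist x y

theorem bddBelow_range_add_mul_dist (hφ : BddBelow (range φ)) (hK : 0 ≤ K) (x : X) :
    BddBelow (range fun y => φ y + K * dist x y) := by
  obtain ⟨m, hm⟩ := hφ
  refine ⟨m, ?_⟩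
  rintro _ ⟨y, rfl⟩
  linarith [hm ⟨y, rfl⟩, mul_nonneg hK (dist_nonneg (x := x) (y := y))]

theorem infConv_le (hφ : BddBelow (range φ)) (hK : 0 ≤ K) (x : X) :
    infConv φ K x ≤ φ x := by
  simpa [infConv] using ciInf_le (bddBelow_range_add_mul_dist hφ hK x) x

variable [Nonempty X]

theorem le_infConv (h : ∀ y, c ≤ φ y + K * dist x y) : c ≤ infConv φ K x := le_ciInf h

theorem infConv_le_infConv_add (hφ : BddBelow (range φ)) (hK : 0 ≤ K)
    (h : ∀ y, φ y + K * dist x y ≤ ψ y + K' * dist x' y + c) :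
    infConv φ K x ≤ infConv ψ K' x' + c := by
  rw [← sub_le_iff_le_add]
  refine le_infConv fun y => sub_le_iff_le_add.2 ?_
  exact (ciInf_le (bddBelow_range_add_mul_dist hφ hK x) y).trans (h y)

theorem abs_infConv_sub_infConv_le_mul_dist (hφ : BddBelow (range φ)) (hK : 0 ≤ K) :
    |infConv φ K x - infConv φ K x'| ≤ K * dist x x' := by
  have key : ∀ x x' : X, infConv φ K x ≤ infConv φ K x' + K * dist x x' := fun x x' =>
    infConv_le_infConv_add hφ hK fun y => by
      nlinarith [mul_le_mul_of_nonneg_left (dist_triangle x x' y) hK]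
  rw [abs_sub_le_iff]
  exact ⟨by linarith [key x x'], by linarith [dist_comm x x' ▸ key x' x]⟩

theorem abs_infConv_sub_infConv_le (hφ : BddBelow (range φ)) (hψ : BddBelow (range ψ))
    (hK : 0 ≤ K) (h : ∀ y, |φ y - ψ y| ≤ c) : |infConv φ K x - infConv ψ K x| ≤ c := by
  have key : ∀ φ ψ : X → ℝ, BddBelow (range φ) → (∀ y, φ y - ψ y ≤ c) →
      infConv φ K x ≤ infConv ψ K x + c := fun φ ψ hφ h =>
    infConv_le_infConv_add hφ hK fun y => by linarith [h y]
  rw [abs_sub_le_iff]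
  exact ⟨by linarith [key φ ψ hφ fun y => (abs_sub_le_iff.1 (h y)).1],
    by linarith [key ψ φ hψ fun y => (abs_sub_le_iff.1 (h y)).2]⟩

theorem abs_infConv_sub_infConv_le_abs_sub_mul (hφ : BddBelow (range φ)) (hK : 0 ≤ K)
    (hK' : 0 ≤ K') {D : ℝ} (hD : ∀ y, dist x y ≤ D) :
    |infConv φ K x - infConv φ K' x| ≤ |K - K'| * D := by
  have key : ∀ K K', 0 ≤ K → infConv φ K x ≤ infConv φ K' x + |K - K'| * D :=
    fun K K' hK => infConv_le_infConv_add hφ hK fun y => by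
      nlinarith [le_abs_self (K - K'), abs_nonneg (K - K'), hD y, dist_nonneg (x := x) (y := y)]
  rw [abs_sub_le_iff]
  exact ⟨by linarith [key K K' hK], by linarith [abs_sub_comm K K' ▸ key K' K hK']⟩

theorem tendstoUniformly_infConv (hφ : UniformContinuous φ)
    (hb : Bornology.IsBounded (range φ)) :
    TendstoUniformly (infConv φ) φ atTop := by
  rw [Metric.tendstoUniformly_iff]
  intro ε hε
  obtain ⟨δ, hδ, hφδ⟩ := Metric.uniformContinuous_iff.1 hφ (ε / 2) (half_pos hε)
  obtain ⟨C, hC⟩ := Metric.isBounded_iff.1 hb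
  refine eventually_atTop.2 ⟨max 0 (C / δ), fun K hK x => ?_⟩
  have hK0 : 0 ≤ K := (le_max_left _ _).trans hK
  have hCK : C ≤ K * δ := (div_le_iff₀ hδ).1 ((le_max_right _ _).trans hK)
  have hlow : φ x - ε / 2 ≤ infConv φ K x := le_infConv fun y => by
    rcases lt_or_ge (dist x y) δ with hxy | hxy
    · have := hφδ hxy
      rw [Real.dist_eq, abs_lt] at this
      nlinarith [mul_nonneg hK0 (dist_nonneg (x := x) (y := y))]
    · have := (Real.dist_eq _ _ ▸ hC ⟨x, rfl⟩ ⟨y, rfl⟩ : |φ x - φ y| ≤ C)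
      nlinarith [le_abs_self (φ x - φ y), mul_le_mul_of_nonneg_left hxy hK0]
  rw [Real.dist_eq, abs_lt]
  constructor <;> linarith [infConv_le hb.bddBelow hK0 x]

end InfConv

theorem log_le_htop_of_comb (T : C(I, I)) {N : ℕ} {ε : ℝ} (hε : 0 < ε) {a b : Fin N → I}
    (hab : ∀ i, a i ≤ b i) (hsep : ∀ i j, i < j → (b i : ℝ) + ε ≤ a j)
    (hdown : ∀ i j, T (a i) ≤ a j) (hup : ∀ i j, b j ≤ T (b i)) :
    ENNReal.log N ≤ htop T := by
  refine IsHorseshoe.log_le_coverEntropy (J := fun i => Icc (a i) (b i))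
    ⟨fun i => nonempty_Icc.2 (hab i), fun i j y hy => ?_, fun i j hij x hx y hy => ?_⟩ hε
  · exact intermediate_value_Icc (hab i) T.continuous.continuousOn
      ⟨(hdown i j).trans hy.1, hy.2.trans (hup i j)⟩
  · have hx' : (a i : ℝ) ≤ x ∧ (x : ℝ) ≤ b i := hx
    have hy' : (a j : ℝ) ≤ y ∧ (y : ℝ) ≤ b j := hy
    rw [Subtype.dist_eq, Real.dist_eq, le_abs]
    rcases hij.lt_or_gt with h | h
    · exact Or.inr (by linarith [hsep i j h])
    · exact Or.inl (by linarith [hsep j i h])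

theorem log_le_htop_of_window (T : C(I, I)) {N : ℕ} {L q : ℝ} (hL : 0 < L) (hq : 0 ≤ q)
    (hq1 : q + 2 * (N + 1 : ℝ) * L ≤ 1)
    (hdown : ∀ y : I, q ≤ (y : ℝ) → (y : ℝ) ≤ q + 2 * (N + 1 : ℝ) * L →
      Real.cos (π * y / L) = -1 → (T y : ℝ) ≤ max 0 (y - 2 * (N + 1 : ℝ) * L))
    (hup : ∀ y : I, q ≤ (y : ℝ) → (y : ℝ) ≤ q + 2 * (N + 1 : ℝ) * L →
      Real.cos (π * y / L) = 1 → min 1 (y + 2 * (N + 1 : ℝ) * L) ≤ T y) :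
    ENNReal.log N ≤ htop T := by
  obtain ⟨M, hqM, hMq⟩ : ∃ M : ℕ, q ≤ 2 * L * M ∧ 2 * L * M ≤ q + 2 * L := by
    refine ⟨⌈q / (2 * L)⌉₊, ?_, ?_⟩
    · exact (div_le_iff₀' (by positivity)).1 (Nat.le_ceil _)
    · have := Nat.ceil_lt_add_one (div_nonneg hq (by positivity : (0 : ℝ) ≤ 2 * L))
      rw [← sub_lt_iff_lt_add, lt_div_iff₀' (by positivity)] at this
      nlinarith
  have hgrid : ∀ i : Fin N,
      q ≤ L * (2 * (M + i) + 1) ∧ L * (2 * (M + i) + 2) ≤ q + 2 * (N + 1 : ℝ) * L := by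
    intro i
    have hi : (i : ℝ) + 1 ≤ N := by exact_mod_cast i.isLt
    constructor <;> nlinarith
  let a : Fin N → I := fun i => ⟨L * (2 * (M + i) + 1), by
    constructor <;> nlinarith [hgrid i]⟩
  let b : Fin N → I := fun i => ⟨L * (2 * (M + i) + 2), by
    constructor <;> nlinarith [hgrid i]⟩
  have hab : ∀ i, (a i : ℝ) ≤ b i := fun i => by
    simp only [a, b]
    linarith
  have hcos_a : ∀ i, Real.cos (π * a i / L) = -1 := fun i => by
    rw [show π * (a i : ℝ) / L = ((M + i : ℕ) : ℝ) * (2 * π) + π by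
      simp only [a]; field_simp; push_cast; ring]
    exact Real.cos_nat_mul_two_pi_add_pi _
  have hcos_b : ∀ i, Real.cos (π * b i / L) = 1 := fun i => by
    rw [show π * (b i : ℝ) / L = ((M + i + 1 : ℕ) : ℝ) * (2 * π) by
      simp only [b]; field_simp; push_cast; ring]
    exact Real.cos_nat_mul_two_pi _
  refine log_le_htop_of_comb T hL hab (fun i j hij => ?_) (fun i j => ?_) (fun i j => ?_)
  · have : (i : ℝ) + 1 ≤ j := by exact_mod_cast hij
    simp only [a, b]
    nlinarith
  · refine (hdown (a i) (hgrid i).1 ((hab i).trans (hgrid i).2) (hcos_a i)).trans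
      (max_le (a j).2.1 ?_)
    linarith [hab i, (hgrid i).2, (hgrid j).1]
  · refine (le_min (b j).2.2 ?_).trans
      (hup (b i) ((hgrid i).1.trans (hab i)) (hgrid i).2 (hcos_b i))
    linarith [hab i, (hgrid i).1, (hgrid j).2]

namespace EntropyHomotopy

theorem dist_le_one (x y : I) : dist x y ≤ 1 := by
  rw [Subtype.dist_eq, Real.dist_eq, abs_le]
  constructor <;> linarith [x.2.1, x.2.2, y.2.1, y.2.2]

theorem bddBelow_range_coe (f : C(I, I)) : BddBelow (range fun y => (f y : ℝ)) :=
  ⟨0, by rintro _ ⟨y, rfl⟩; exact (f y).2.1⟩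

theorem abs_coe_sub_coe_le_dist (f g : C(I, I)) (y : I) : |(f y : ℝ) - g y| ≤ dist f g := by
  rw [← Real.dist_eq, ← Subtype.dist_eq]
  exact ContinuousMap.dist_apply_le_dist y

noncomputable def lipApprox (f : C(I, I)) (t : ℝ) (x : I) : ℝ :=
  (1 - t) * infConv (fun y => (f y : ℝ)) t⁻¹ x + t * x

noncomputable def amplitude (f : C(I, I)) (t : ℝ) (x : I) : ℝ :=
  max 0 (t / 2 - |lipApprox f t x - x|)

-- `2 (N + 1)` half-periods fill the window of length `t ^ 2 / 32` around a fixed point.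
noncomputable def wavelength (N : ℕ) (t : ℝ) : ℝ := t ^ 2 / (64 * (N + 1))

noncomputable def comb (N : ℕ) (f : C(I, I)) (t : ℝ) (x : I) : I :=
  projIcc 0 1 zero_le_one
    (lipApprox f t x + amplitude f t x * Real.cos (π * x / wavelength N t))

variable {N : ℕ} {f f₀ : C(I, I)} {t : ℝ} {x x' : I}

theorem lipApprox_mem (ht : 0 ≤ t) (ht1 : t ≤ 1) : lipApprox f t x ∈ Icc (0 : ℝ) 1 := by
  have h0 : 0 ≤ infConv (fun y => (f y : ℝ)) t⁻¹ x := le_infConv fun y => by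
    have := mul_nonneg (inv_nonneg.2 ht) (dist_nonneg (x := x) (y := y))
    linarith [(f y).2.1]
  have h1 := infConv_le (bddBelow_range_coe f) (inv_nonneg.2 ht) x
  have h2 := (f x).2.2
  constructor <;> unfold lipApprox <;> nlinarith [x.2.1, x.2.2]

theorem abs_lipApprox_sub_lipApprox_le (ht : 0 < t) (ht1 : t ≤ 1) :
    |lipApprox f t x - lipApprox f t x'| ≤ 2 / t * dist x x' := by
  set ic := infConv (fun y => (f y : ℝ)) t⁻¹
  have hic : |ic x - ic x'| ≤ t⁻¹ * dist x x' :=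
    abs_infConv_sub_infConv_le_mul_dist (bddBelow_range_coe f) (inv_nonneg.2 ht.le)
  have hx : |(x : ℝ) - x'| = dist x x' := by rw [Subtype.dist_eq, Real.dist_eq]
  have ht' : t ≤ t⁻¹ := ht1.trans ((one_le_inv₀ ht).2 ht1)
  calc |lipApprox f t x - lipApprox f t x'|
      = |(1 - t) * (ic x - ic x') + t * (x - x')| := by
        simp only [lipApprox, ic]
        ring_nf
    _ ≤ (1 - t) * |ic x - ic x'| + t * |(x : ℝ) - x'| := by
        refine (abs_add_le _ _).trans_eq ?_
        rw [abs_mul, abs_mul, abs_of_nonneg (sub_nonneg.2 ht1), abs_of_pos ht]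
    _ ≤ 1 * (t⁻¹ * dist x x') + t⁻¹ * dist x x' := by
        rw [hx]
        gcongr
        linarith
    _ = 2 / t * dist x x' := by ring

theorem continuous_lipApprox (ht : 0 < t) (ht1 : t ≤ 1) : Continuous (lipApprox f t) :=
  (LipschitzWith.of_dist_le_mul (K := ⟨2 / t, by positivity⟩) fun x x' => by
    rw [Real.dist_eq]
    exact abs_lipApprox_sub_lipApprox_le ht ht1).continuous

theorem exists_lipApprox_eq_self (ht : 0 < t) (ht1 : t ≤ 1) : ∃ p : I, lipApprox f t p = p := by
  have h0 := (lipApprox_mem (f := f) (x := 0) ht.le ht1).1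
  have h1 := (lipApprox_mem (f := f) (x := 1) ht.le ht1).2
  obtain ⟨p, hp⟩ := intermediate_value_univ 1 0 ((continuous_lipApprox ht ht1).sub
    continuous_subtype_val) ⟨sub_nonpos.2 (by simpa using h1), sub_nonneg.2 (by simpa using h0)⟩
  exact ⟨p, sub_eq_zero.1 hp⟩

theorem abs_lipApprox_sub_self_le (ht : 0 < t) (ht1 : t ≤ 1) {p : I} (hp : lipApprox f t p = p)
    (hx : dist x p ≤ t ^ 2 / 32) : |lipApprox f t x - x| ≤ t / 8 := by
  have hlip := abs_lipApprox_sub_lipApprox_le (f := f) (x := x) (x' := p) ht ht1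
  rw [hp] at hlip
  have hxp : |(p : ℝ) - x| ≤ t ^ 2 / 32 := by
    rwa [abs_sub_comm, ← Real.dist_eq, ← Subtype.dist_eq]
  have h2 : 2 / t * dist x p ≤ t / 16 := by
    calc 2 / t * dist x p ≤ 2 / t * (t ^ 2 / 32) := by gcongr
      _ = t / 16 := by field_simp; ring
  calc |lipApprox f t x - x| ≤ |lipApprox f t x - p| + |(p : ℝ) - x| := abs_sub_le _ _ _
    _ ≤ t / 16 + t ^ 2 / 32 := by linarith
    _ ≤ t / 8 := by nlinarith

theorem abs_lipApprox_sub_le (ht : 0 ≤ t) (ht1 : t ≤ 1) :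
    |lipApprox f t x - f₀ x| ≤
      dist f f₀ + |infConv (fun y => (f₀ y : ℝ)) t⁻¹ x - f₀ x| + t := by
  set ic := infConv (fun y => (f y : ℝ)) t⁻¹ x
  set ic₀ := infConv (fun y => (f₀ y : ℝ)) t⁻¹ x
  have hic : |ic - ic₀| ≤ dist f f₀ :=
    abs_infConv_sub_infConv_le (bddBelow_range_coe f) (bddBelow_range_coe f₀) (inv_nonneg.2 ht)
      (abs_coe_sub_coe_le_dist f f₀)
  have hx : |(x : ℝ) - f₀ x| ≤ 1 := by
    rw [← Real.dist_eq, ← Subtype.dist_eq]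
    exact dist_le_one _ _
  calc |lipApprox f t x - f₀ x| = |(1 - t) * (ic - f₀ x) + t * (x - f₀ x)| := by
        simp only [lipApprox, ic]
        ring_nf
    _ ≤ (1 - t) * |ic - f₀ x| + t * |(x : ℝ) - f₀ x| := by
        refine (abs_add_le _ _).trans_eq ?_
        rw [abs_mul, abs_mul, abs_of_nonneg (sub_nonneg.2 ht1), abs_of_nonneg ht]
    _ ≤ 1 * (dist f f₀ + |ic₀ - f₀ x|) + t * 1 := by
        gcongr
        · linarith
        · linarith [abs_sub_le ic ic₀ (f₀ x)]
    _ = dist f f₀ + |ic₀ - f₀ x| + t := by ring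

theorem abs_comb_sub_lipApprox_le (ht : 0 ≤ t) (ht1 : t ≤ 1) :
    |(comb N f t x : ℝ) - lipApprox f t x| ≤ t / 2 := by
  have hA0 : 0 ≤ amplitude f t x := le_max_left _ _
  have hA : amplitude f t x ≤ t / 2 :=
    max_le (by linarith) (by linarith [abs_nonneg (lipApprox f t x - x)])
  calc |(comb N f t x : ℝ) - lipApprox f t x|
      = |(comb N f t x : ℝ) - projIcc 0 1 zero_le_one (lipApprox f t x)| := by
        rw [projIcc_of_mem _ (lipApprox_mem ht ht1)]
    _ ≤ |amplitude f t x * Real.cos (π * x / wavelength N t)| :=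
        (abs_projIcc_sub_projIcc _).trans_eq (by rw [add_sub_cancel_left])
    _ ≤ t / 2 * 1 := by
        rw [abs_mul, abs_of_nonneg hA0]
        exact mul_le_mul hA (Real.abs_cos_le_one _) (abs_nonneg _) (by linarith)
    _ = t / 2 := mul_one _

theorem comb_le_of_cos_eq_neg_one (hx : |lipApprox f t x - x| ≤ t / 8)
    (hcos : Real.cos (π * x / wavelength N t) = -1) :
    (comb N f t x : ℝ) ≤ max 0 (x - t / 4) := by
  have hA : t / 2 - |lipApprox f t x - x| ≤ amplitude f t x := le_max_right _ _
  rw [comb, coe_projIcc, hcos]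
  refine max_le_max le_rfl ((min_le_right _ _).trans ?_)
  linarith [le_abs_self (lipApprox f t x - x)]

theorem le_comb_of_cos_eq_one (hx : |lipApprox f t x - x| ≤ t / 8)
    (hcos : Real.cos (π * x / wavelength N t) = 1) :
    min 1 (x + t / 4) ≤ (comb N f t x : ℝ) := by
  have hA : t / 2 - |lipApprox f t x - x| ≤ amplitude f t x := le_max_right _ _
  rw [comb, coe_projIcc, hcos]
  refine le_max_of_le_right (min_le_min le_rfl ?_)
  linarith [neg_abs_le (lipApprox f t x - x)]

theorem log_le_htop_of_coe_eq_comb (ht : 0 < t) (ht1 : t ≤ 1) {T : C(I, I)}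
    (hT : ⇑T = comb N f t) : ENNReal.log N ≤ htop T := by
  obtain ⟨p, hp⟩ := exists_lipApprox_eq_self (f := f) ht ht1
  have hL : 0 < wavelength N t := by unfold wavelength; positivity
  have hδ : 2 * (N + 1 : ℝ) * wavelength N t = t ^ 2 / 32 := by
    unfold wavelength; field_simp; ring
  have hδt : t ^ 2 / 32 ≤ t / 4 := by nlinarith
  obtain ⟨q, hq0, hq1, hqp, hpq⟩ :
      ∃ q : ℝ, 0 ≤ q ∧ q + t ^ 2 / 32 ≤ 1 ∧ q ≤ p ∧ (p : ℝ) ≤ q + t ^ 2 / 32 := by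
    refine ⟨min (p : ℝ) (1 - t ^ 2 / 32), le_min p.2.1 (by nlinarith),
      by linarith [min_le_right (p : ℝ) (1 - t ^ 2 / 32)], min_le_left _ _, ?_⟩
    rcases min_cases (p : ℝ) (1 - t ^ 2 / 32) with ⟨h, -⟩ | ⟨h, -⟩ <;>
      linarith [p.2.2, sq_nonneg t]
  have hwin : ∀ y : I, q ≤ y → (y : ℝ) ≤ q + t ^ 2 / 32 →
      |lipApprox f t y - y| ≤ t / 8 := by
    intro y hqy hyq
    refine abs_lipApprox_sub_self_le ht ht1 hp ?_
    rw [Subtype.dist_eq, Real.dist_eq, abs_le]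
    constructor <;> linarith
  refine log_le_htop_of_window T hL hq0 (by rwa [hδ])
    (fun y hqy hyq hcos => ?_) (fun y hqy hyq hcos => ?_) <;> rw [hδ] at hyq ⊢ <;> rw [hT]
  · exact (comb_le_of_cos_eq_neg_one (hwin y hqy hyq) hcos).trans
      (max_le_max le_rfl (by linarith))
  · exact (min_le_min le_rfl (by linarith)).trans (le_comb_of_cos_eq_one (hwin y hqy hyq) hcos)

theorem continuousAt_infConv {K₀ : ℝ} (hK₀ : 0 < K₀) (f₀ : C(I, I)) (x₀ : I) :
    ContinuousAt (fun p : C(I, I) × ℝ × I => infConv (fun y => (p.1 y : ℝ)) p.2.1 p.2.2)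
      (f₀, K₀, x₀) := by
  set ic := fun p : C(I, I) × ℝ × I => infConv (fun y => (p.1 y : ℝ)) p.2.1 p.2.2
  set bound := fun p : C(I, I) × ℝ × I => dist p.1 f₀ + |p.2.1 - K₀| + K₀ * dist p.2.2 x₀
  have hbound : ∀ᶠ p in 𝓝 (f₀, K₀, x₀), dist (ic p) (ic (f₀, K₀, x₀)) ≤ bound p := by
    filter_upwards [continuousAt_snd.fst.eventually (lt_mem_nhds hK₀)]
    rintro ⟨f, K, x⟩ hK
    have h1 : |ic (f, K, x) - ic (f₀, K, x)| ≤ dist f f₀ :=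
      abs_infConv_sub_infConv_le (bddBelow_range_coe f) (bddBelow_range_coe f₀) hK.le
        (abs_coe_sub_coe_le_dist f f₀)
    have h2 : |ic (f₀, K, x) - ic (f₀, K₀, x)| ≤ |K - K₀| * 1 :=
      abs_infConv_sub_infConv_le_abs_sub_mul (bddBelow_range_coe f₀) hK.le hK₀.le (dist_le_one x)
    have h3 : |ic (f₀, K₀, x) - ic (f₀, K₀, x₀)| ≤ K₀ * dist x x₀ :=
      abs_infConv_sub_infConv_le_mul_dist (bddBelow_range_coe f₀) hK₀.le
    rw [Real.dist_eq]
    linarith [abs_sub_le (ic (f, K, x)) (ic (f₀, K, x)) (ic (f₀, K₀, x₀)),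
      abs_sub_le (ic (f₀, K, x)) (ic (f₀, K₀, x)) (ic (f₀, K₀, x₀))]
  have hlim : Tendsto bound (𝓝 (f₀, K₀, x₀)) (𝓝 0) := by
    have : Continuous bound := by fun_prop
    simpa [bound] using this.tendsto (f₀, K₀, x₀)
  exact tendsto_iff_dist_tendsto_zero.2
    (squeeze_zero' (Eventually.of_forall fun _ => dist_nonneg) hbound hlim)

theorem continuousAt_lipApprox {t₀ : ℝ} (ht₀ : 0 < t₀) (f₀ : C(I, I)) (x₀ : I) :
    ContinuousAt (fun p : C(I, I) × ℝ × I => lipApprox p.1 p.2.1 p.2.2) (f₀, t₀, x₀) := by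
  have hmap :
      ContinuousAt (fun p : C(I, I) × ℝ × I => (p.1, p.2.1⁻¹, p.2.2)) (f₀, t₀, x₀) :=
    continuousAt_fst.prodMk ((continuousAt_snd.fst.inv₀ ht₀.ne').prodMk continuousAt_snd.snd)
  have hic := (continuousAt_infConv (inv_pos.2 ht₀) f₀ x₀).comp_of_eq hmap rfl
  exact ((continuousAt_const.sub continuousAt_snd.fst).mul hic).add
    (continuousAt_snd.fst.mul (continuous_subtype_val.continuousAt.comp continuousAt_snd.snd))

theorem continuousAt_comb {t₀ : ℝ} (ht₀ : 0 < t₀) (f₀ : C(I, I)) (x₀ : I) :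
    ContinuousAt (fun p : C(I, I) × ℝ × I => comb N p.1 p.2.1 p.2.2) (f₀, t₀, x₀) := by
  have hlip := continuousAt_lipApprox ht₀ f₀ x₀
  have hw : wavelength N t₀ ≠ 0 := by unfold wavelength; positivity
  have hx : ContinuousAt (fun p : C(I, I) × ℝ × I => (p.2.2 : ℝ)) (f₀, t₀, x₀) :=
    continuous_subtype_val.continuousAt.comp continuousAt_snd.snd
  have hwave :
      ContinuousAt (fun p : C(I, I) × ℝ × I => wavelength N p.2.1) (f₀, t₀, x₀) :=
    (continuousAt_snd.fst.pow 2).div_const _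
  have hamp :
      ContinuousAt (fun p : C(I, I) × ℝ × I => amplitude p.1 p.2.1 p.2.2) (f₀, t₀, x₀) :=
    continuousAt_const.max ((continuousAt_snd.fst.div_const 2).sub (hlip.sub hx).abs)
  exact continuous_projIcc.continuousAt.comp (hlip.add (hamp.mul
    (Real.continuous_cos.continuousAt.comp ((continuousAt_const.mul hx).div hwave hw))))

noncomputable def homotopyFun (N : ℕ) (p : (C(I, I) × I) × I) : I :=
  if p.1.2 = 0 then p.1.1 p.2 else comb N p.1.1 p.1.2 p.2

theorem dist_comb_le (ht : 0 ≤ t) (ht1 : t ≤ 1) :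
    dist (comb N f t x) (f₀ x) ≤
      2 * t + dist f f₀ + |infConv (fun y => (f₀ y : ℝ)) t⁻¹ x - f₀ x| := by
  rw [Subtype.dist_eq, Real.dist_eq]
  linarith [abs_sub_le (comb N f t x : ℝ) (lipApprox f t x) (f₀ x),
    abs_comb_sub_lipApprox_le (N := N) (f := f) (x := x) ht ht1,
    abs_lipApprox_sub_le (f := f) (f₀ := f₀) (x := x) ht ht1]

theorem tendstoUniformly_infConv_coe (f : C(I, I)) :
    TendstoUniformly (infConv fun y => (f y : ℝ)) (fun y => (f y : ℝ)) atTop :=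
  tendstoUniformly_infConv (CompactSpace.uniformContinuous_of_continuous (by fun_prop))
    ((Metric.isBounded_Icc (0 : ℝ) 1).subset (range_subset_iff.2 fun y => (f y).2))

theorem continuousAt_homotopyFun_zero (f₀ : C(I, I)) (x₀ : I) :
    ContinuousAt (homotopyFun N) ((f₀, 0), x₀) := by
  have hval : homotopyFun N ((f₀, 0), x₀) = f₀ x₀ := if_pos rfl
  rw [ContinuousAt, hval, Metric.tendsto_nhds]
  intro ε hε
  obtain ⟨K₁, hK₁⟩ := eventually_atTop.1
    (Metric.tendstoUniformly_iff.1 (tendstoUniformly_infConv_coe f₀) (ε / 4) (by positivity))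
  have hf : ∀ᶠ p : (C(I, I) × I) × I in 𝓝 ((f₀, 0), x₀), dist p.1.1 f₀ < ε / 4 :=
    Metric.tendsto_nhds.1
      ((continuous_fst.fst : Continuous fun p : (C(I, I) × I) × I => p.1.1).tendsto
        ((f₀, 0), x₀)) _ (by positivity)
  have ht : ∀ᶠ p : (C(I, I) × I) × I in 𝓝 ((f₀, 0), x₀),
      (p.1.2 : ℝ) < min (ε / 8) (max K₁ 1)⁻¹ :=
    (continuous_subtype_val.continuousAt.comp continuousAt_fst.snd).eventually
      (gt_mem_nhds (by positivity))
  have hx : ∀ᶠ p : (C(I, I) × I) × I in 𝓝 ((f₀, 0), x₀),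
      dist (f₀ p.2) (f₀ x₀) < ε / 4 :=
    Metric.tendsto_nhds.1 ((f₀.continuous.comp continuous_snd).tendsto _) _ (by positivity)
  filter_upwards [hf, ht, hx]
  rintro ⟨⟨f, t⟩, x⟩ hf ht hx
  have hclose : dist (homotopyFun N ((f, t), x)) (f₀ x) < 3 * ε / 4 := by
    rcases eq_or_ne t 0 with rfl | ht0
    · rw [homotopyFun, if_pos rfl]
      exact (ContinuousMap.dist_apply_le_dist x).trans_lt (by linarith)
    have htpos : 0 < (t : ℝ) := lt_of_le_of_ne t.2.1 fun h => ht0 (Subtype.ext h.symm)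
    have hK : K₁ ≤ (t : ℝ)⁻¹ := (le_max_left K₁ 1).trans
      ((lt_inv_comm₀ htpos (by positivity)).1 (ht.trans_le (min_le_right _ _))).le
    have hconv := hK₁ _ hK x
    rw [Real.dist_eq, abs_sub_comm] at hconv
    rw [homotopyFun, if_neg ht0]
    linarith [dist_comb_le (N := N) (f := f) (f₀ := f₀) (x := x) htpos.le t.2.2,
      min_le_left (ε / 8) (max K₁ 1)⁻¹]
  linarith [dist_triangle (homotopyFun N ((f, t), x)) (f₀ x) (f₀ x₀)]

theorem continuous_homotopyFun (N : ℕ) : Continuous (homotopyFun N) := by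
  refine continuous_iff_continuousAt.2 fun ⟨⟨f₀, t₀⟩, x₀⟩ => ?_
  rcases eq_or_ne t₀ 0 with rfl | ht₀
  · exact continuousAt_homotopyFun_zero f₀ x₀
  have hpos : 0 < (t₀ : ℝ) := lt_of_le_of_ne t₀.2.1 fun h => ht₀ (Subtype.ext h.symm)
  have heq : (fun p : (C(I, I) × I) × I => comb N p.1.1 p.1.2 p.2) =ᶠ[𝓝 ((f₀, t₀), x₀)]
      homotopyFun N := by
    filter_upwards [continuousAt_fst.snd.eventually_ne ht₀] with p hp
    rw [homotopyFun, if_neg hp]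
  have hmap : ContinuousAt (fun p : (C(I, I) × I) × I => (p.1.1, (p.1.2 : ℝ), p.2))
      ((f₀, t₀), x₀) := continuousAt_fst.fst.prodMk
    ((continuous_subtype_val.continuousAt.comp continuousAt_fst.snd).prodMk continuousAt_snd)
  exact ((continuousAt_comb hpos f₀ x₀).comp_of_eq hmap rfl).congr heq

noncomputable def homotopy (N : ℕ) : C(I, I) × I → C(I, I) :=
  ContinuousMap.curry ⟨homotopyFun N, continuous_homotopyFun N⟩

theorem continuous_homotopy (N : ℕ) : Continuous (homotopy N) :=
  (ContinuousMap.curry _).continuous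

theorem homotopy_zero (f : C(I, I)) : homotopy N (f, 0) = f :=
  ContinuousMap.ext fun _ => if_pos rfl

theorem lipApprox_one : lipApprox f 1 x = x := by
  simp [lipApprox]

theorem homotopy_one (f g : C(I, I)) : homotopy N (f, 1) = homotopy N (g, 1) := by
  ext x
  simp only [homotopy, ContinuousMap.curry_apply, ContinuousMap.coe_mk, homotopyFun, one_ne_zero,
    if_false, Icc.coe_one, comb, amplitude, lipApprox_one]

theorem log_le_htop_homotopy {t : I} (ht : 0 < t) (f : C(I, I)) :
    ENNReal.log N ≤ htop (homotopy N (f, t)) :=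
  log_le_htop_of_coe_eq_comb ht t.2.2 (funext fun _ => if_neg ht.ne')

end EntropyHomotopy

theorem exists_coe_le_log_natCast (a : ℝ) : ∃ N : ℕ, (a : EReal) ≤ ENNReal.log N := by
  refine ⟨⌈Real.exp a⌉₊, ?_⟩
  have hN : (0 : ℝ) < ⌈Real.exp a⌉₊ := Nat.cast_pos.2 (Nat.ceil_pos.2 (Real.exp_pos a))
  rw [← ENNReal.ofReal_natCast, ENNReal.log_ofReal_of_pos hN, EReal.coe_le_coe_iff]
  exact (Real.le_log_iff_exp_le hN).2 (Nat.le_ceil _)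

theorem exists_homotopy_entropy_ge_general (a : ℝ) :
    ∃ H : C(I, I) × I → C(I, I), Continuous H ∧
      (∀ f : C(I, I), H (f, 0) = f) ∧
      (∀ (f : C(I, I)) (t : I), 0 < t → (a : EReal) ≤ htop (H (f, t))) ∧
      (∃ c : C(I, I), ∀ f : C(I, I), H (f, 1) = c) := by
  obtain ⟨N, hN⟩ := exists_coe_le_log_natCast a
  exact ⟨EntropyHomotopy.homotopy N, EntropyHomotopy.continuous_homotopy N,
    EntropyHomotopy.homotopy_zero,
    fun f t ht => hN.trans (EntropyHomotopy.log_le_htop_homotopy ht f),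
    _, fun f => EntropyHomotopy.homotopy_one f (ContinuousMap.id I)⟩

/-- For every real `a ≥ 0`, there is a homotopy `H` on `C(I)` with `H_0 = id`, such that
`h_top(H_t(f)) ≥ a` for all `t ∈ (0,1]` and all `f`, and `H_1` is a constant map. -/
theorem exists_homotopy_entropy_ge (a : ℝ) (ha : 0 ≤ a) :
    ∃ H : C(I, I) × I → C(I, I), Continuous H ∧
      (∀ f : C(I, I), H (f, 0) = f) ∧
      (∀ (f : C(I, I)) (t : I), 0 < t → (a : EReal) ≤ htop (H (f, t))) ∧
      (∃ c : C(I, I), ∀ f : C(I, I), H (f, 1) = c) :=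
  exists_homotopy_entropy_ge_general a
end

section
/- For every real number a ≥ 0, both E_{≥a} = {f ∈ C(𝕀) : h_top(f) ≥ a} and E_{>a} = {f ∈ C(𝕀) : h_top(f) > a} are homotopy dense in C(𝕀). -/
/-!
Squeeze `f` into `[t/4, 1 - t/4]` and average it over windows of length `t`. The resulting map
`g` is `2/t`-Lipschitz and has a fixed point `c`, so it moves the points of `[c, c + t²/48]` by at
most `t/16`. Fixed points do not depend continuously on `f`, so instead of placing a perturbation
at `c` we add the sine wave `max 0 (t/4 - |g x - x|) * sin (2πx/p)` everywhere: it is continuous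
in `(f, t)`, vanishes at `t = 0`, and near `c` its amplitude is at least `3t/16`. With period
`p = t²/(96(N+1))` it makes `N + 1` separated intervals of `[c, c + t²/48]` each cover all of them,
a horseshoe, so the entropy is at least `log (N + 1)`, which exceeds `a` for large `N`.
-/

open unitInterval

/-- A subset `A` of a topological space `X` is homotopy dense if there is a homotopy
`H : X × [0,1] → X` with `H(·,0) = id` and `H(x,t) ∈ A` for all `t > 0`. -/
def HomotopyDense {X : Type*} [TopologicalSpace X] (A : Set X) : Prop :=
  ∃ H : X × I → X, Continuous H ∧ (∀ x : X, H (x, 0) = x) ∧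
    ∀ (x : X) (t : I), 0 < t → H (x, t) ∈ A

open Set Filter Topology Real Dynamics UniformSpace intervalIntegral

namespace Dynamics

variable {X ι : Type*} {T : X → X} {B : ι → Set X}

theorem exists_iterate_mem_of_subset_image (hcov : ∀ i j, B j ⊆ T '' B i)
    (hne : ∀ i, (B i).Nonempty) :
    ∀ (n : ℕ) (w : Fin (n + 1) → ι), ∃ x, ∀ k : Fin (n + 1), T^[k] x ∈ B (w k)
  | 0, w => by
    obtain ⟨x, hx⟩ := hne (w 0)
    exact ⟨x, fun k => by simpa [Fin.fin_one_eq_zero k] using hx⟩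
  | n + 1, w => by
    obtain ⟨y, hy⟩ := exists_iterate_mem_of_subset_image hcov hne n (Fin.tail w)
    obtain ⟨x, hx, rfl⟩ := hcov (w 0) (w 1) (hy 0)
    exact ⟨x, Fin.cases hx fun k => by simpa [Function.iterate_succ_apply, Fin.tail] using hy k⟩

variable [MetricSpace X] [Fintype ι] {γ : ℝ}

theorem card_pow_le_netMaxcard_of_subset_image (hγ : 0 < γ) (hcov : ∀ i j, B j ⊆ T '' B i)
    (hne : ∀ i, (B i).Nonempty)
    (hsep : ∀ i j, i ≠ j → ∀ x ∈ B i, ∀ y ∈ B j, γ ≤ dist x y) (n : ℕ) :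
    (Fintype.card ι : ℕ∞) ^ (n + 1) ≤
      netMaxcard T univ {p : X × X | dist p.1 p.2 < γ / 2} (n + 1) := by
  classical
  set U : SetRel X X := {p : X × X | dist p.1 p.2 < γ / 2}
  choose x hx using exists_iterate_mem_of_subset_image hcov hne n
  have hdisj : ∀ v w, v ≠ w → Disjoint (ball (x v) (dynEntourage T U (n + 1)))
      (ball (x w) (dynEntourage T U (n + 1))) := by
    intro v w hvw
    obtain ⟨k, hk⟩ := Function.ne_iff.1 hvw
    refine disjoint_left.2 fun z hzv hzw => ?_
    have h₁ := mem_ball_dynEntourage.1 hzv k k.2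
    have h₂ := mem_ball_dynEntourage.1 hzw k k.2
    simp only [ball, U, mem_preimage, mem_ofPred_eq] at h₁ h₂
    have := hsep _ _ hk _ (hx v k) _ (hx w k)
    linarith [dist_triangle_right (T^[k] (x v)) (T^[k] (x w)) (T^[k] z)]
  have hinj : Function.Injective x := fun v w hvw => by
    by_contra hvw'
    have hself : ∀ y, y ∈ ball y (dynEntourage T U (n + 1)) := fun y =>
      mem_ball_dynEntourage.2 fun k _ => by simpa [ball, U] using half_pos hγ
    exact disjoint_left.1 (hdisj v w hvw') (hself (x v)) (hvw ▸ hself (x w))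
  have hnet : IsDynNetIn T univ U (n + 1) (Finset.univ.image x : Finset X) :=
    ⟨subset_univ _, fun y hy z hz hyz => by
      obtain ⟨v, -, rfl⟩ := Finset.mem_image.1 hy
      obtain ⟨w, -, rfl⟩ := Finset.mem_image.1 hz
      exact hdisj v w (fun h => hyz (h ▸ rfl))⟩
  calc (Fintype.card ι : ℕ∞) ^ (n + 1) = (Finset.univ.image x).card := by
        rw [Finset.card_image_of_injective _ hinj]; simp
    _ ≤ netMaxcard T univ U (n + 1) := hnet.card_le_netMaxcard

theorem log_card_le_coverEntropy_of_subset_image [Nonempty ι] (hγ : 0 < γ)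
    (hcov : ∀ i j, B j ⊆ T '' B i) (hne : ∀ i, (B i).Nonempty)
    (hsep : ∀ i j, i ≠ j → ∀ x ∈ B i, ∀ y ∈ B j, γ ≤ dist x y) :
    (Real.log (Fintype.card ι) : EReal) ≤ coverEntropy T univ := by
  have hU : {p : X × X | dist p.1 p.2 < γ / 2} ∈ uniformity X :=
    Metric.dist_mem_uniformity (half_pos hγ)
  refine le_trans ?_ (netEntropyEntourage_le_coverEntropy T univ hU)
  have hlog : (Real.log (Fintype.card ι) : EReal) = ENNReal.log (Fintype.card ι) := by
    rw [← ENNReal.ofReal_natCast, ENNReal.log_ofReal_of_pos (mod_cast Fintype.card_pos)]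
  rw [hlog, ← ExpGrowth.expGrowthSup_pow]
  refine ExpGrowth.expGrowthSup_eventually_monotone (eventually_atTop.2 ⟨1, fun n hn => ?_⟩)
  obtain ⟨m, rfl⟩ := Nat.exists_eq_add_of_le' hn
  simpa using ENat.toENNReal_mono (card_pow_le_netMaxcard_of_subset_image hγ hcov hne hsep m)

theorem log_le_coverEntropy_of_oscillation {g : ℝ → ℝ} (hg : Continuous g) {T : I → I}
    (hT : ∀ y, (T y : ℝ) = g y) {N : ℕ} (hN : 0 < N) {c p : ℝ} (hp : 0 < p) (hc₀ : 0 ≤ c)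
    (hc₁ : c + 2 * N * p ≤ 1)
    (hosc : ∀ y, c ≤ y → y + p ≤ c + 2 * N * p →
      ∃ x₁ ∈ Icc y (y + p), ∃ x₂ ∈ Icc y (y + p), g x₁ ≤ c ∧ c + 2 * N * p ≤ g x₂) :
    (Real.log N : EReal) ≤ coverEntropy T univ := by
  have : NeZero N := ⟨hN.ne'⟩
  set J : Fin N → Set ℝ := fun j => Icc (c + 2 * j * p) (c + 2 * j * p + p)
  have hJ : ∀ j : Fin N, c ≤ c + 2 * j * p ∧ c + 2 * j * p + p ≤ c + 2 * N * p := fun j => by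
    have : (j : ℝ) + 1 ≤ N := by exact_mod_cast j.2
    constructor <;> nlinarith [Nat.cast_nonneg (α := ℝ) j]
  have hJI : ∀ j, J j ⊆ I := fun j x hx => ⟨by linarith [hx.1, hJ j], by linarith [hx.2, hJ j]⟩
  have hcov : ∀ i j, (Subtype.val ⁻¹' J j : Set I) ⊆ T '' (Subtype.val ⁻¹' J i) := by
    intro i j y hy
    obtain ⟨x₁, hx₁, x₂, hx₂, hgx₁, hgx₂⟩ := hosc _ (hJ i).1 (hJ i).2
    have hy' : (y : ℝ) ∈ uIcc (g x₁) (g x₂) :=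
      Icc_subset_uIcc ⟨by linarith [hy.1, hJ j], by linarith [hy.2, hJ j]⟩
    obtain ⟨x, hx, hgx⟩ := intermediate_value_uIcc hg.continuousOn hy'
    have hxJ : x ∈ J i := ordConnected_Icc.uIcc_subset hx₁ hx₂ hx
    exact ⟨⟨x, hJI i hxJ⟩, hxJ, Subtype.ext ((hT _).trans hgx)⟩
  have hne : ∀ j, (Subtype.val ⁻¹' J j : Set I).Nonempty := fun j =>
    have hmem : c + 2 * j * p ∈ J j := left_mem_Icc.2 (by linarith)
    ⟨⟨_, hJI j hmem⟩, hmem⟩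
  have hsep : ∀ i j : Fin N, i < j → ∀ x ∈ J i, ∀ y ∈ J j, p ≤ y - x := by
    intro i j hij x hx y hy
    have : (i : ℝ) + 1 ≤ j := by exact_mod_cast hij
    nlinarith [hx.2, hy.1]
  refine (Fintype.card_fin N ▸ log_card_le_coverEntropy_of_subset_image hp hcov hne ?_)
  intro i j hij x hx y hy
  rw [Subtype.dist_eq, Real.dist_eq]
  rcases hij.lt_or_gt with h | h
  · rw [abs_sub_comm]; exact (hsep i j h _ hx _ hy).trans (le_abs_self _)
  · exact (hsep j i h _ hy _ hx).trans (le_abs_self _)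

end Dynamics

namespace intervalIntegral

theorem abs_integral_sub_integral_shift_le {g : ℝ → ℝ} (hg : Continuous g) {C : ℝ}
    (hC : ∀ u, |g u| ≤ C) (x y w : ℝ) :
    |(∫ u in x..x + w, g u) - ∫ u in y..y + w, g u| ≤ 2 * C * |x - y| := by
  have hi : ∀ a b, IntervalIntegrable g MeasureTheory.volume a b := hg.intervalIntegrable
  have hbound : ∀ a b, |∫ u in a..b, g u| ≤ C * |b - a| := fun a b =>
    by simpa using norm_integral_le_of_norm_le_const fun u _ => (norm_eq_abs _).trans_le (hC u)
  have hsplit : (∫ u in x..x + w, g u) - ∫ u in y..y + w, g u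
      = (∫ u in x..y, g u) + ∫ u in y + w..x + w, g u := by
    rw [← integral_add_adjacent_intervals (hi x y) (hi y (x + w)),
      ← integral_add_adjacent_intervals (hi y (y + w)) (hi (y + w) (x + w))]
    ring
  calc _ ≤ C * |y - x| + C * |(x + w) - (y + w)| := by
        rw [hsplit]; exact (abs_add_le _ _).trans (add_le_add (hbound _ _) (hbound _ _))
    _ = 2 * C * |x - y| := by rw [abs_sub_comm y x, add_sub_add_right_eq_sub]; ring

end intervalIntegral

namespace Real

theorem exists_mem_Icc_sin_eq {p : ℝ} (hp : 0 < p) (y θ : ℝ) :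
    ∃ x ∈ Icc y (y + p), sin (2 * π * x / p) = sin θ := by
  set k : ℤ := ⌈y / p - θ / (2 * π)⌉
  have hk₁ : y / p - θ / (2 * π) ≤ k := Int.le_ceil _
  have hk₂ : (k : ℝ) < y / p - θ / (2 * π) + 1 := Int.ceil_lt_add_one _
  refine ⟨p * (θ / (2 * π) + k), ⟨?_, ?_⟩, ?_⟩
  · calc y = p * (y / p) := (mul_div_cancel₀ y hp.ne').symm
      _ ≤ p * (θ / (2 * π) + k) := mul_le_mul_of_nonneg_left (by linarith) hp.le
  · calc p * (θ / (2 * π) + k) ≤ p * (y / p + 1) :=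
          mul_le_mul_of_nonneg_left (by linarith) hp.le
      _ = y + p := by field_simp
  · rw [show 2 * π * (p * (θ / (2 * π) + k)) / p = θ + k * (2 * π) by field_simp,
      sin_add_int_mul_two_pi]

end Real

noncomputable section

namespace IntervalEntropy

def squeeze (f : C(I, I)) (t u : ℝ) : ℝ :=
  (1 - t / 2) * f (projIcc 0 1 zero_le_one u) + t / 4

theorem continuous_squeeze :
    Continuous fun z : (C(I, I) × ℝ) × ℝ => squeeze z.1.1 z.1.2 z.2 := by
  have : Continuous fun z : (C(I, I) × ℝ) × ℝ => z.1.1 (projIcc 0 1 zero_le_one z.2) :=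
    ContinuousEval.continuous_eval.comp
      ((continuous_fst.comp continuous_fst).prodMk
        ((continuous_projIcc (h := zero_le_one)).comp continuous_snd))
  unfold squeeze
  fun_prop

theorem squeeze_mem_Icc (f : C(I, I)) {t : ℝ} (ht : t ≤ 2) (u : ℝ) :
    squeeze f t u ∈ Icc (t / 4) (1 - t / 4) := by
  obtain ⟨h₀, h₁⟩ := (f (projIcc 0 1 zero_le_one u)).2
  constructor <;> unfold squeeze <;> nlinarith

def mollify (f : C(I, I)) (t x : ℝ) : ℝ :=
  ∫ v in (0 : ℝ)..1, squeeze f t (x + t * v)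

theorem continuous_mollify :
    Continuous fun z : (C(I, I) × ℝ) × ℝ => mollify z.1.1 z.1.2 z.2 := by
  refine continuous_parametric_intervalIntegral_of_continuous' ?_ 0 1
  exact continuous_squeeze.comp
    (f := fun p : ((C(I, I) × ℝ) × ℝ) × ℝ => ((p.1.1.1, p.1.1.2), p.1.2 + p.1.1.2 * p.2))
    (by fun_prop)

theorem mollify_mem_Icc (f : C(I, I)) {t : ℝ} (ht : t ≤ 2) (x : ℝ) :
    mollify f t x ∈ Icc (t / 4) (1 - t / 4) := by
  have hi : IntervalIntegrable (fun v => squeeze f t (x + t * v)) MeasureTheory.volume 0 1 :=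
    (continuous_squeeze.comp (f := fun v => ((f, t), x + t * v)) (by fun_prop)).intervalIntegrable
      0 1
  unfold mollify
  constructor
  · simpa using integral_mono_on zero_le_one intervalIntegrable_const hi
      fun v _ => (squeeze_mem_Icc f ht _).1
  · simpa using integral_mono_on zero_le_one hi intervalIntegrable_const
      fun v _ => (squeeze_mem_Icc f ht _).2

theorem mollify_zero (f : C(I, I)) (x : I) : mollify f 0 x = f x := by
  simp [mollify, squeeze]

theorem mollify_eq_average (f : C(I, I)) {t : ℝ} (ht : t ≠ 0) (x : ℝ) :
    mollify f t x = t⁻¹ * ∫ u in x..x + t, squeeze f t u := by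
  simp_rw [mollify, add_comm x, integral_comp_mul_add (squeeze f t) ht x]
  simp [add_comm]

theorem abs_mollify_sub_mollify_le (f : C(I, I)) {t : ℝ} (ht₀ : 0 < t) (ht₂ : t ≤ 2) (x y : ℝ) :
    |mollify f t x - mollify f t y| ≤ 2 / t * |x - y| := by
  have hC : ∀ u, |squeeze f t u| ≤ 1 := fun u => by
    obtain ⟨h₁, h₂⟩ := squeeze_mem_Icc f ht₂ u
    exact abs_le.2 ⟨by linarith, by linarith⟩
  have hg : Continuous (squeeze f t) :=
    continuous_squeeze.comp (f := fun u => ((f, t), u)) (by fun_prop)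
  rw [mollify_eq_average f ht₀.ne', mollify_eq_average f ht₀.ne', ← mul_sub, abs_mul, abs_inv,
    abs_of_pos ht₀]
  calc t⁻¹ * |(∫ u in x..x + t, squeeze f t u) - ∫ u in y..y + t, squeeze f t u|
      ≤ t⁻¹ * (2 * 1 * |x - y|) := by
        gcongr; exact abs_integral_sub_integral_shift_le hg hC x y t
    _ = 2 / t * |x - y| := by ring

theorem exists_mollify_eq_self (f : C(I, I)) {t : ℝ} (ht₀ : 0 ≤ t) (ht₂ : t ≤ 2) :
    ∃ c, mollify f t c = c := by
  have hcont : Continuous fun x => mollify f t x - x :=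
    (continuous_mollify.comp (f := fun x => ((f, t), x)) (by fun_prop)).sub continuous_id
  have h₀ := (mollify_mem_Icc f ht₂ 0).1
  have h₁ := (mollify_mem_Icc f ht₂ 1).2
  obtain ⟨c, -, hc⟩ := intermediate_value_Icc' zero_le_one hcont.continuousOn
    (show (0 : ℝ) ∈ Icc (mollify f t 1 - 1) (mollify f t 0 - 0) by constructor <;> linarith)
  exact ⟨c, sub_eq_zero.1 hc⟩

theorem abs_mollify_sub_self_le (f : C(I, I)) {t : ℝ} (ht₀ : 0 < t) (ht₁ : t ≤ 1) {c x : ℝ}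
    (hc : mollify f t c = c) (hx : x ∈ Icc c (c + t ^ 2 / 48)) :
    |mollify f t x - x| ≤ t / 16 := by
  have hxc : |x - c| ≤ t ^ 2 / 48 := abs_le.2 ⟨by nlinarith [hx.1], by linarith [hx.2]⟩
  calc |mollify f t x - x| = |(mollify f t x - mollify f t c) - (x - c)| := by rw [hc]; ring_nf
    _ ≤ |mollify f t x - mollify f t c| + |x - c| := abs_sub _ _
    _ ≤ 2 / t * (t ^ 2 / 48) + t ^ 2 / 48 := by
        gcongr
        exact (abs_mollify_sub_mollify_le f ht₀ (by linarith) x c).trans (by gcongr)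
    _ = t / 24 + t ^ 2 / 48 := by field_simp; ring
    _ ≤ t / 16 := by nlinarith

def wiggleAmplitude (f : C(I, I)) (t x : ℝ) : ℝ :=
  max 0 (t / 4 - |mollify f t x - x|)

/-- `2 (N + 1)` periods fill the interval of length `t ^ 2 / 48` to the right of a fixed point of
`mollify f t`, on which `abs_mollify_sub_self_le` applies. -/
def wigglePeriod (N : ℕ) (t : ℝ) : ℝ :=
  t ^ 2 / (96 * (N + 1))

def perturb (N : ℕ) (f : C(I, I)) (t x : ℝ) : ℝ :=
  mollify f t x + wiggleAmplitude f t x * sin (2 * π * x / wigglePeriod N t)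

theorem abs_wiggleAmplitude_mul_sin_le (f : C(I, I)) (t x θ : ℝ) :
    |wiggleAmplitude f t x * sin θ| ≤ |t| / 4 := by
  have hS : |wiggleAmplitude f t x| ≤ |t| / 4 := by
    rw [abs_of_nonneg (le_max_left _ _)]
    exact max_le (by positivity) (by linarith [le_abs_self t, abs_nonneg (mollify f t x - x)])
  simpa [abs_mul] using mul_le_mul hS (abs_sin_le_one θ) (abs_nonneg _) (by positivity)

theorem continuous_perturb (N : ℕ) :
    Continuous fun z : (C(I, I) × ℝ) × ℝ => perturb N z.1.1 z.1.2 z.2 := by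
  have hS : Continuous fun z : (C(I, I) × ℝ) × ℝ => wiggleAmplitude z.1.1 z.1.2 z.2 := by
    have := continuous_mollify
    unfold wiggleAmplitude
    fun_prop
  refine continuous_mollify.add (continuous_iff_continuousAt.2 fun z => ?_)
  by_cases ht : z.1.2 = 0
  · have hbound : Tendsto (fun w : (C(I, I) × ℝ) × ℝ => |w.1.2| / 4) (𝓝 z) (𝓝 0) := by
      simpa [ht] using ((continuous_snd.comp continuous_fst).abs.div_const 4).tendsto z
    have hz : wiggleAmplitude z.1.1 z.1.2 z.2 * sin (2 * π * z.2 / wigglePeriod N z.1.2) = 0 := by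
      simp [wiggleAmplitude, ht]
    rw [ContinuousAt, hz]
    exact squeeze_zero_norm (fun w => (Real.norm_eq_abs _).trans_le
      (abs_wiggleAmplitude_mul_sin_le w.1.1 w.1.2 w.2 _)) hbound
  · have hp : wigglePeriod N z.1.2 ≠ 0 := by unfold wigglePeriod; positivity
    unfold wigglePeriod at hp ⊢
    exact hS.continuousAt.mul (continuous_sin.continuousAt.comp
      (ContinuousAt.div (by fun_prop) (by fun_prop) hp))

theorem perturb_mem_Icc (N : ℕ) (f : C(I, I)) {t : ℝ} (ht₀ : 0 ≤ t) (ht₂ : t ≤ 2) (x : ℝ) :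
    perturb N f t x ∈ Icc 0 1 := by
  have hm := mollify_mem_Icc f ht₂ x
  have hw := abs_le.1 (abs_wiggleAmplitude_mul_sin_le f t x (2 * π * x / wigglePeriod N t))
  rw [abs_of_nonneg ht₀] at hw
  constructor <;> unfold perturb <;> linarith [hm.1, hm.2, hw.1, hw.2]

theorem perturb_zero (N : ℕ) (f : C(I, I)) (x : I) : perturb N f 0 x = f x := by
  simp [perturb, wiggleAmplitude, mollify_zero]

theorem le_mollify_add_wiggleAmplitude (f : C(I, I)) {t : ℝ} (ht₀ : 0 < t) (ht₁ : t ≤ 1)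
    {c x : ℝ} (hc : mollify f t c = c) (hx : x ∈ Icc c (c + t ^ 2 / 48)) :
    c + t ^ 2 / 48 ≤ mollify f t x + wiggleAmplitude f t x := by
  have hd := abs_mollify_sub_self_le f ht₀ ht₁ hc hx
  rw [wiggleAmplitude, max_eq_right (by linarith)]
  nlinarith [hx.1, neg_abs_le (mollify f t x - x)]

theorem mollify_sub_wiggleAmplitude_le (f : C(I, I)) {t : ℝ} (ht₀ : 0 < t) (ht₁ : t ≤ 1)
    {c x : ℝ} (hc : mollify f t c = c) (hx : x ∈ Icc c (c + t ^ 2 / 48)) :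
    mollify f t x - wiggleAmplitude f t x ≤ c := by
  have hd := abs_mollify_sub_self_le f ht₀ ht₁ hc hx
  rw [wiggleAmplitude, max_eq_right (by linarith)]
  nlinarith [hx.2, le_abs_self (mollify f t x - x)]

theorem log_succ_le_coverEntropy_perturb (N : ℕ) (f : C(I, I)) {t : ℝ} (ht₀ : 0 < t)
    (ht₁ : t ≤ 1) {T : I → I} (hT : ∀ y, (T y : ℝ) = perturb N f t y) :
    (Real.log (N + 1) : EReal) ≤ coverEntropy T univ := by
  obtain ⟨c, hc⟩ := exists_mollify_eq_self f ht₀.le (by linarith)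
  have hcI := hc ▸ mollify_mem_Icc f (by linarith : t ≤ 2) c
  have hp : 0 < wigglePeriod N t := by unfold wigglePeriod; positivity
  have hR : c + 2 * ((N + 1 : ℕ) : ℝ) * wigglePeriod N t = c + t ^ 2 / 48 := by
    unfold wigglePeriod; push_cast; field_simp; ring
  have hg : Continuous (perturb N f t) :=
    (continuous_perturb N).comp (f := fun x => ((f, t), x)) (by fun_prop)
  have := log_le_coverEntropy_of_oscillation hg hT N.succ_pos (c := c) hp (by linarith [hcI.1])
    (by rw [hR]; nlinarith [hcI.2]) ?_
  · simpa using this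
  intro y hy hy'
  rw [hR] at hy' ⊢
  have hsub : Icc y (y + wigglePeriod N t) ⊆ Icc c (c + t ^ 2 / 48) :=
    Icc_subset_Icc hy hy'
  obtain ⟨x₁, hx₁, hsin₁⟩ := exists_mem_Icc_sin_eq hp y (-(π / 2))
  obtain ⟨x₂, hx₂, hsin₂⟩ := exists_mem_Icc_sin_eq hp y (π / 2)
  refine ⟨x₁, hx₁, x₂, hx₂, ?_, ?_⟩
  · simpa [perturb, hsin₁, ← sub_eq_add_neg] using
      mollify_sub_wiggleAmplitude_le f ht₀ ht₁ hc (hsub hx₁)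
  · simpa [perturb, hsin₂] using le_mollify_add_wiggleAmplitude f ht₀ ht₁ hc (hsub hx₂)

def perturbFamily (N : ℕ) : C((C(I, I) × I) × I, I) where
  toFun z := ⟨perturb N z.1.1 z.1.2 z.2,
    perturb_mem_Icc N z.1.1 z.1.2.2.1 (by linarith [z.1.2.2.2]) z.2⟩
  continuous_toFun := Continuous.subtype_mk ((continuous_perturb N).comp
    (f := fun z : (C(I, I) × I) × I => ((z.1.1, (z.1.2 : ℝ)), (z.2 : ℝ))) (by fun_prop)) _

def perturbHomotopy (N : ℕ) : C(C(I, I) × I, C(I, I)) :=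
  (perturbFamily N).curry

theorem perturbHomotopy_zero (N : ℕ) (f : C(I, I)) : perturbHomotopy N (f, 0) = f :=
  ContinuousMap.ext fun x => Subtype.ext (perturb_zero N f x)

end IntervalEntropy

end

open IntervalEntropy in
theorem E_ge_and_E_gt_homotopyDense_general (a : ℝ) :
    HomotopyDense {f : C(I, I) | (a : EReal) ≤ htop f} ∧
    HomotopyDense {f : C(I, I) | (a : EReal) < htop f} := by
  obtain ⟨N, hN⟩ := exists_nat_gt (Real.exp a)
  have hlog : a < Real.log (N + 1) := (Real.lt_log_iff_exp_lt (by positivity)).2 (by linarith)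
  have hlt : ∀ f (t : I), 0 < t → (a : EReal) < htop (perturbHomotopy N (f, t)) :=
    fun f t ht => (EReal.coe_lt_coe_iff.2 hlog).trans_le
      (log_succ_le_coverEntropy_perturb N f ht t.2.2 fun _ => rfl)
  exact ⟨⟨perturbHomotopy N, map_continuous _, perturbHomotopy_zero N,
      fun f t ht => (hlt f t ht).le⟩,
    ⟨perturbHomotopy N, map_continuous _, perturbHomotopy_zero N, hlt⟩⟩

/-- For every real `a ≥ 0`, both `E_{≥ a}` and `E_{> a}` are homotopy dense in `C(I)`. -/
theorem E_ge_and_E_gt_homotopyDense (a : ℝ) (ha : 0 ≤ a) :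
    HomotopyDense {f : C(I, I) | (a : EReal) ≤ htop f} ∧
    HomotopyDense {f : C(I, I) | (a : EReal) < htop f} :=
  E_ge_and_E_gt_homotopyDense_general a
end

section
/- There does not exist a continuous map φ : C(𝕀) → 𝕀 such that φ(f) is a fixed point of f (i.e., f(φ(f)) = φ(f)) for every f ∈ C(𝕀). -/
/-!
The truncated translations `x ↦ projIcc (x + t)` form a continuous path `t ↦ shift t` in `C(I, I)`
through the identity. For `t > 0` the only fixed point of `shift t` is `1`, for `t < 0` it is `0`,
so a continuous fixed-point selection along this path would have to take both values `0` and `1`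
at `t = 0`.
-/

open unitInterval Set Function

namespace unitInterval

noncomputable def shift : C(ℝ, C(I, I)) :=
  ContinuousMap.curry ⟨fun p : ℝ × I => projIcc 0 1 zero_le_one (p.2 + p.1), by fun_prop⟩

lemma shift_apply (t : ℝ) (x : I) : shift t x = projIcc 0 1 zero_le_one (x + t) := rfl

lemma eq_one_of_isFixedPt_shift {t : ℝ} (ht : 0 < t) {x : I} (hx : IsFixedPt (shift t) x) :
    x = 1 := by
  have h := congrArg Subtype.val hx
  rw [shift_apply, coe_projIcc] at h
  obtain ⟨hx0, hx1⟩ := x.2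
  ext
  simp only [Icc.coe_one]
  grind

lemma eq_zero_of_isFixedPt_shift {t : ℝ} (ht : t < 0) {x : I} (hx : IsFixedPt (shift t) x) :
    x = 0 := by
  have h := congrArg Subtype.val hx
  rw [shift_apply, coe_projIcc] at h
  obtain ⟨hx0, hx1⟩ := x.2
  ext
  simp only [Icc.coe_zero]
  grind

end unitInterval

/-- There is no continuous selection of fixed points: no continuous map `φ : C(I) → I`
satisfies `f(φ(f)) = φ(f)` for every `f ∈ C(I)`. -/
theorem no_continuous_fixed_point_selection :
    ¬ ∃ φ : C(I, I) → I, Continuous φ ∧ ∀ f : C(I, I), f (φ f) = φ f := by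
  rintro ⟨φ, hφ, hfix⟩
  have hcont : Continuous (φ ∘ shift) := hφ.comp shift.continuous
  have h_one : EqOn (φ ∘ shift) 1 (Ioi 0) := fun t ht => eq_one_of_isFixedPt_shift ht (hfix _)
  have h_zero : EqOn (φ ∘ shift) 0 (Iio 0) := fun t ht => eq_zero_of_isFixedPt_shift ht (hfix _)
  have h1 : φ (shift 0) = 1 := h_one.closure hcont continuous_const (by simp)
  have h0 : φ (shift 0) = 0 := h_zero.closure hcont continuous_const (by simp)
  exact zero_ne_one (h0.symm.trans h1)
end

section
/- For any f, g ∈ C([a,b],𝕀), the maps f̃ and g̃ satisfy d(f̃, g̃) ≤ d(f, g), where d is the supremum metric; that is, the operation f ↦ f̃ is 1-Lipschitz on C([a,b],𝕀). -/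
/-- The maximum value `M(f)` of `f` on `[a, b]`. -/
noncomputable def Mval {a b : ℝ} (f : Set.Icc a b → ℝ) : ℝ :=
  sSup (Set.range f)

/-- `c₁(f)`, the smallest point of `[a, b]` where `f` attains its maximum. -/
noncomputable def c1 {a b : ℝ} (f : Set.Icc a b → ℝ) : ℝ :=
  sInf {x : ℝ | ∃ h : x ∈ Set.Icc a b, f ⟨x, h⟩ = Mval f}

/-- `c₂(f)`, the largest point of `[a, b]` where `f` attains its maximum. -/
noncomputable def c2 {a b : ℝ} (f : Set.Icc a b → ℝ) : ℝ :=
  sSup {x : ℝ | ∃ h : x ∈ Set.Icc a b, f ⟨x, h⟩ = Mval f}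

/-- The map `f̃`: the running maximum of `f` from the left on `[a, c₁(f)]`, the maximum value
`M(f)` on `[c₁(f), c₂(f)]`, and the running maximum of `f` from the right on `[c₂(f), b]`. -/
noncomputable def tilde {a b : ℝ} (f : Set.Icc a b → ℝ) : Set.Icc a b → ℝ :=
  fun x =>
    if (x : ℝ) ≤ c1 f then sSup (f '' {t : Set.Icc a b | (t : ℝ) ≤ (x : ℝ)})
    else if (x : ℝ) ≤ c2 f then Mval f
    else sSup (f '' {t : Set.Icc a b | (x : ℝ) ≤ (t : ℝ)})

open Set

variable {a b : ℝ}

lemma maxset_props (hab : a ≤ b) (f : C(Set.Icc a b, ℝ)) :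
    ∃ hm : c1 f ∈ Set.Icc a b, ∃ hM : c2 f ∈ Set.Icc a b,
      f ⟨c1 f, hm⟩ = Mval f ∧ f ⟨c2 f, hM⟩ = Mval f ∧ c1 f ≤ c2 f := by
  haveI : Nonempty (Set.Icc a b) := ⟨⟨a, le_refl a, hab⟩⟩
  have hbdd : BddAbove (Set.range f) := (isCompact_range f.continuous).bddAbove
  obtain ⟨z, _, hz⟩ := isCompact_univ.exists_isMaxOn univ_nonempty f.continuous.continuousOn
  have hzM : f z = Mval f := by
    refine le_antisymm (le_csSup hbdd ⟨z, rfl⟩) (csSup_le (Set.range_nonempty f) ?_)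
    rintro _ ⟨y, rfl⟩; exact hz (Set.mem_univ y)
  set S : Set ℝ := {x : ℝ | ∃ h : x ∈ Set.Icc a b, f ⟨x, h⟩ = Mval f} with hS
  have hSeq : S = Subtype.val '' (f ⁻¹' {Mval f}) := by
    ext x; constructor
    · rintro ⟨h, hfx⟩; exact ⟨⟨x, h⟩, hfx, rfl⟩
    · rintro ⟨⟨y, hy⟩, hfy, rfl⟩; exact ⟨hy, hfy⟩
  have hSne : S.Nonempty := ⟨z, z.2, hzM⟩
  have hSc : IsClosed S := by
    rw [hSeq]
    exact ((isClosed_singleton.preimage f.continuous).isCompact.image continuous_subtype_val).isClosed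
  have hSsub : S ⊆ Set.Icc a b := fun x hx => hx.1
  have hbb : BddBelow S := (bddBelow_Icc).mono hSsub
  have hba : BddAbove S := (bddAbove_Icc).mono hSsub
  have h1 : c1 f ∈ S := hSc.csInf_mem hSne hbb
  have h2 : c2 f ∈ S := hSc.csSup_mem hSne hba
  exact ⟨h1.1, h2.1, h1.2, h2.2, csInf_le_csSup hSne hbb hba⟩

lemma tilde_eq_min (hab : a ≤ b) (f : C(Set.Icc a b, ℝ)) (x : Set.Icc a b) :
    tilde ⇑f x = min (sSup (f '' {t : Set.Icc a b | (t : ℝ) ≤ (x : ℝ)}))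
      (sSup (f '' {t : Set.Icc a b | (x : ℝ) ≤ (t : ℝ)})) := by
  obtain ⟨hm, hM, hf1, hf2, h12⟩ := maxset_props hab f
  have hbdd : BddAbove (Set.range f) := (isCompact_range f.continuous).bddAbove
  set L := sSup (f '' {t : Set.Icc a b | (t : ℝ) ≤ (x : ℝ)}) with hL
  set R := sSup (f '' {t : Set.Icc a b | (x : ℝ) ≤ (t : ℝ)}) with hR
  have hLM : L ≤ Mval f := by
    refine csSup_le ⟨f x, x, by simp, rfl⟩ ?_
    rintro _ ⟨t, _, rfl⟩; exact le_csSup hbdd ⟨t, rfl⟩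
  have hRM : R ≤ Mval f := by
    refine csSup_le ⟨f x, x, by simp, rfl⟩ ?_
    rintro _ ⟨t, _, rfl⟩; exact le_csSup hbdd ⟨t, rfl⟩
  have hbL : BddAbove (f '' {t : Set.Icc a b | (t : ℝ) ≤ (x : ℝ)}) :=
    hbdd.mono (Set.image_subset_range _ _)
  have hbR : BddAbove (f '' {t : Set.Icc a b | (x : ℝ) ≤ (t : ℝ)}) :=
    hbdd.mono (Set.image_subset_range _ _)
  have hLge : c1 f ≤ (x : ℝ) → L = Mval f := fun h =>
    le_antisymm hLM (hf1 ▸ le_csSup hbL ⟨⟨c1 f, hm⟩, h, rfl⟩)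
  have hRge : (x : ℝ) ≤ c2 f → R = Mval f := fun h =>
    le_antisymm hRM (hf2 ▸ le_csSup hbR ⟨⟨c2 f, hM⟩, h, rfl⟩)
  unfold tilde
  split_ifs with h1 h2
  · have : R = Mval f := hRge (le_trans h1 h12)
    rw [this, min_eq_left hLM]
  · rw [hLge (le_of_not_ge h1), hRge h2, min_self]
  · rw [hLge (h12.trans (le_of_not_ge h2)), min_eq_right hRM]

lemma sSup_image_le (f g : C(Set.Icc a b, ℝ)) (s : Set (Set.Icc a b)) (hs : s.Nonempty) :
    sSup (f '' s) ≤ sSup (g '' s) + dist f g := by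
  have hbg : BddAbove (g '' s) := ((isCompact_range g.continuous).bddAbove).mono
    (Set.image_subset_range _ _)
  refine csSup_le (hs.image f) ?_
  rintro _ ⟨t, ht, rfl⟩
  calc f t ≤ g t + dist (f t) (g t) := by rw [Real.dist_eq]; nlinarith [le_abs_self (f t - g t)]
    _ ≤ sSup (g '' s) + dist f g :=
      add_le_add (le_csSup hbg ⟨t, ht, rfl⟩) (ContinuousMap.dist_apply_le_dist t)

lemma abs_sSup_image (f g : C(Set.Icc a b, ℝ)) (s : Set (Set.Icc a b)) (hs : s.Nonempty) :
    |sSup (f '' s) - sSup (g '' s)| ≤ dist f g := by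
  rw [abs_sub_le_iff]
  constructor <;> [skip; rw [dist_comm]] <;>
    [exact sub_le_iff_le_add'.mpr (sSup_image_le f g s hs);
     exact sub_le_iff_le_add'.mpr (sSup_image_le g f s hs)]

theorem tilde_lipschitz (a b : ℝ) (hab : a < b) (hsub : Set.Icc a b ⊆ Set.Icc (0 : ℝ) 1)
    (f g : C(Set.Icc a b, ℝ)) (hf : ∀ x, f x ∈ Set.Icc (0 : ℝ) 1)
    (hg : ∀ x, g x ∈ Set.Icc (0 : ℝ) 1) :
    ∀ x : Set.Icc a b, |tilde ⇑f x - tilde ⇑g x| ≤ dist f g := by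
  intro x
  rw [tilde_eq_min hab.le f x, tilde_eq_min hab.le g x]
  refine (abs_min_sub_min_le_max _ _ _ _).trans (max_le ?_ ?_)
  · exact abs_sSup_image f g _ ⟨x, by simp⟩
  · exact abs_sSup_image f g _ ⟨x, by simp⟩
end
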